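/- arXiv:2601.22774 — 6 statements merged into one kernel-verified Lean document; each statement's English description precedes it below -/
import Mathlib

section
/- Let G be a unital associative algebra over a commutative 2-torsionfree ring R, let e ∈ G be an idempotent, f = 1 - e, and let φ : G × G × G → G be a 3-Lie derivation. Then for all a1, a2 ∈ eGe: (i) e*φ(e,a1,a2)*f = a2*(e*φ(e,a1,e)*f) = a1*(e*φ(e,e,a2)*f) = a1*a2*(e*φ(e,e,e)*f) = a2*a1*(e*φ(e,e,e)*f); (ii) f*φ(e,a1,a2)*e = (f*φ(e,a1,e)*e)*a2 = (f*φ(e,e,a2)*e)*a1 = (f*φ(e,e,e)*e)*a1*a2 = (f*φ(e,e,e)*e)*a2*a1; and for all b1, b2 ∈ fGf: (iii) e*φ(e,b1,b2)*f = -(e*φ(e,b1,e)*f)*b2 = -(e*φ(e,e,b2)*f)*b1 = (e*φ(e,e,e)*f)*b1*b2 = (e*φ(e,e,e)*f)*b2*b1; (iv) f*φ(e,b1,b2)*e = -b2*(f*φ(e,b1,e)*e) = -b1*(f*φ(e,e,b2)*e) = b2*b1*(f*φ(e,e,e)*e) = b1*b2*(f*φ(e,e,e)*e). -/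
/-- Commutator `[x,y] = x*y - y*x`. -/
def brk {G : Type*} [Ring G] (x y : G) : G := x * y - y * x

/-- `corner p q x` says `x` lies in the Peirce corner `p * G * q`. -/
def corner {G : Type*} [Ring G] (p q x : G) : Prop := p * x * q = x

/-- `central z` says `z` lies in the center of `G`. -/
def central {G : Type*} [Ring G] (z : G) : Prop := ∀ g : G, z * g = g * z

/-- Membership in the center of the corner algebra `p*G*p`. -/
def cornerCentral {G : Type*} [Ring G] (p a : G) : Prop :=
  corner p p a ∧ ∀ a', corner p p a' → a * a' = a' * a

/-- Membership in `A ∪ B` where `A = eGe`, `B = fGf`, `f = 1 - e`. -/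
def inAB {G : Type*} [Ring G] (e x : G) : Prop :=
  corner e e x ∨ corner (1 - e) (1 - e) x

/-- A Lie biderivation: `R`-bilinear and a Lie derivation in each argument. -/
def IsLieBider (R : Type*) [CommRing R] {A : Type*} [Ring A] [Algebra R A]
    (φ : A → A → A) : Prop :=
  (∀ y : A, IsLinearMap R fun x => φ x y) ∧
  (∀ x : A, IsLinearMap R fun y => φ x y) ∧
  (∀ y a b : A, φ (brk a b) y = brk (φ a y) b + brk a (φ b y)) ∧
  (∀ x a b : A, φ x (brk a b) = brk (φ x a) b + brk a (φ x b))

/-- A 3-Lie derivation: `R`-linear in each argument and a Lie derivation in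
each argument when the other two are fixed. -/
def IsLieDer3 (R : Type*) [CommRing R] {G : Type*} [Ring G] [Algebra R G]
    (ψ : G → G → G → G) : Prop :=
  (∀ y z : G, IsLinearMap R fun x => ψ x y z) ∧
  (∀ x z : G, IsLinearMap R fun y => ψ x y z) ∧
  (∀ x y : G, IsLinearMap R fun z => ψ x y z) ∧
  (∀ y z a b : G, ψ (brk a b) y z = brk (ψ a y z) b + brk a (ψ b y z)) ∧
  (∀ x z a b : G, ψ x (brk a b) z = brk (ψ x a z) b + brk a (ψ x b z)) ∧
  (∀ x y a b : G, ψ x y (brk a b) = brk (ψ x y a) b + brk a (ψ x y b))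

/-- Iterated bracket `[x 0, [x 1, …, [x (n-1), x0]…]]`. -/
def iterBr {G : Type*} [Ring G] : {n : ℕ} → (Fin n → G) → G → G
  | 0, _, x0 => x0
  | _ + 1, x, x0 => brk (x 0) (iterBr (Fin.tail x) x0)

/-- An `n`-Lie derivation: `R`-linear in each argument and a Lie derivation in
each argument when the other arguments are fixed. -/
def IsNLieDer (R : Type*) [CommRing R] {G : Type*} [Ring G] [Algebra R G]
    {n : ℕ} (φ : (Fin n → G) → G) : Prop :=
  ∀ (i : Fin n) (x : Fin n → G),
    (IsLinearMap R fun t => φ (Function.update x i t)) ∧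
    ∀ a b : G, φ (Function.update x i (brk a b)) =
      brk (φ (Function.update x i a)) b + brk a (φ (Function.update x i b))

/-- `M = eG(1-e)` is faithful as a left `eGe`-module and right `(1-e)G(1-e)`-module. -/
def Faithful {G : Type*} [Ring G] (e : G) : Prop :=
  (∀ a, corner e e a → (∀ m, corner e (1 - e) m → a * m = 0) → a = 0) ∧
  (∀ b, corner (1 - e) (1 - e) b → (∀ m, corner e (1 - e) m → m * b = 0) → b = 0)

/-- (H1): `Z(A) = e Z(G) e` and `Z(B) = f Z(G) f`. -/
def H1P {G : Type*} [Ring G] (e : G) : Prop :=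
  (∀ a, cornerCentral e a → ∃ w, central w ∧ a = e * w * e) ∧
  (∀ b, cornerCentral (1 - e) b → ∃ w, central w ∧ b = (1 - e) * w * (1 - e))

/-- The corner algebra `pGp` contains no nonzero central ideal. -/
def NoCentralIdeal {G : Type*} [Ring G] (p : G) : Prop :=
  ¬ ∃ c : G, c ≠ 0 ∧ cornerCentral p c ∧ ∀ a, corner p p a → cornerCentral p (a * c)

/-- (H2): `A` or `B` contains no nonzero central ideal. -/
def H2P {G : Type*} [Ring G] (e : G) : Prop :=
  NoCentralIdeal e ∨ NoCentralIdeal (1 - e)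

/-- (H3): central elements annihilating a nonzero element vanish. -/
def H3P (G : Type*) [Ring G] : Prop :=
  ∀ α a : G, central α → α * a = 0 → a ≠ 0 → α = 0

/-- (H4): if `MN = 0 = NM` then `A` or `B` is noncommutative. -/
def H4P {G : Type*} [Ring G] (e : G) : Prop :=
  (∀ m n, corner e (1 - e) m → corner (1 - e) e n → m * n = 0 ∧ n * m = 0) →
    (∃ a1 a2, corner e e a1 ∧ corner e e a2 ∧ a1 * a2 ≠ a2 * a1) ∨
    (∃ b1 b2, corner (1 - e) (1 - e) b1 ∧ corner (1 - e) (1 - e) b2 ∧ b1 * b2 ≠ b2 * b1)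

/-- (H3'): for `n ∈ N`, `Mn = 0 = nM` implies `n = 0`. -/
def H3prime {G : Type*} [Ring G] (e : G) : Prop :=
  ∀ n, corner (1 - e) e n → (∀ m, corner e (1 - e) m → m * n = 0 ∧ n * m = 0) → n = 0

/-- (H4'): for `m ∈ M`, `Nm = 0 = mN` implies `m = 0`. -/
def H4prime {G : Type*} [Ring G] (e : G) : Prop :=
  ∀ m, corner e (1 - e) m → (∀ n, corner (1 - e) e n → n * m = 0 ∧ m * n = 0) → m = 0

/-- (H5): every special pair of bimodule homomorphisms has standard form. -/
def H5P (R : Type*) [CommRing R] {G : Type*} [Ring G] [Algebra R G] (e : G) : Prop :=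
  ∀ F E : G → G,
    (∀ m, corner e (1 - e) m → corner e (1 - e) (F m)) →
    (∀ n, corner (1 - e) e n → corner (1 - e) e (E n)) →
    (∀ m m', corner e (1 - e) m → corner e (1 - e) m' → F (m + m') = F m + F m') →
    (∀ (r : R) (m), corner e (1 - e) m → F (r • m) = r • F m) →
    (∀ n n', corner (1 - e) e n → corner (1 - e) e n' → E (n + n') = E n + E n') →
    (∀ (r : R) (n), corner (1 - e) e n → E (r • n) = r • E n) →
    (∀ a m b, corner e e a → corner e (1 - e) m → corner (1 - e) (1 - e) b →
      F (a * m * b) = a * F m * b) →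
    (∀ b n a, corner (1 - e) (1 - e) b → corner (1 - e) e n → corner e e a →
      E (b * n * a) = b * E n * a) →
    (∀ m n, corner e (1 - e) m → corner (1 - e) e n →
      F m * n + m * E n = 0 ∧ n * F m + E n * m = 0) →
    ∃ ω0 ω1 : G, cornerCentral e ω0 ∧ cornerCentral (1 - e) ω1 ∧
      (∀ m, corner e (1 - e) m → F m = ω0 * m + m * ω1) ∧
      (∀ n, corner (1 - e) e n → E n = -(n * ω0) - ω1 * n)

/-- (H5'): every `R`-linear derivation of `G` is inner. -/
def DerInner (R : Type*) [CommRing R] (G : Type*) [Ring G] [Algebra R G] : Prop :=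
  ∀ d : G → G, IsLinearMap R d → (∀ x y : G, d (x * y) = d x * y + x * d y) →
    ∃ g : G, ∀ x : G, d x = g * x - x * g


lemma lieDerA {G : Type*} [Ring G] {e : G} (he : e * e = e) {d : G → G} (hd0 : d 0 = 0)
    (hd : ∀ x y, d (brk x y) = brk (d x) y + brk x (d y)) {a : G} (ha : corner e e a) :
    e * d a * (1 - e) = a * (e * d e * (1 - e)) ∧
    (1 - e) * d a * e = ((1 - e) * d e * e) * a := by
  have ea : e * a = a := by
    conv_lhs => rw [← ha]
    rw [← mul_assoc, ← mul_assoc, he, ha]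
  have ae : a * e = a := by
    conv_lhs => rw [← ha]
    rw [mul_assoc, he, ha]
  have h := hd e a
  rw [show brk e a = 0 by rw [brk, ea, ae, sub_self], hd0] at h
  simp only [brk] at h
  have E : e * d a - d a * e = a * d e - d e * a := by
    linear_combination (norm := noncomm_ring) -h
  set u := d a
  set v := d e
  constructor
  · linear_combination (norm := noncomm_ring) e*E*(1-e) - he*(u*(1-e)) - (e*u)*he + ea*(v*(1-e)) - ae*(v*(1-e)) + (e*v)*ae
  · linear_combination (norm := noncomm_ring) -((1-e)*E*e) - u*he + (e*u)*he - he*(u*e) + v*ae - v*ea + (e*v)*ea - (e*v)*ae + ea*(v*e)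

lemma lieDerB {G : Type*} [Ring G] {e : G} (he : e * e = e) {d : G → G} (hd0 : d 0 = 0)
    (hd : ∀ x y, d (brk x y) = brk (d x) y + brk x (d y)) {b : G} (hb : corner (1 - e) (1 - e) b) :
    e * d b * (1 - e) = -((e * d e * (1 - e)) * b) ∧
    (1 - e) * d b * e = -(b * ((1 - e) * d e * e)) := by
  have eb : e * b = 0 := by
    conv_lhs => rw [← hb]
    linear_combination (norm := noncomm_ring) -(he*(b*(1-e)))
  have be : b * e = 0 := by
    conv_lhs => rw [← hb]
    linear_combination (norm := noncomm_ring) -((1-e)*b*he)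
  have h := hd e b
  rw [show brk e b = 0 by rw [brk, eb, be, sub_self], hd0] at h
  simp only [brk] at h
  have E : e * d b - d b * e = b * d e - d e * b := by
    linear_combination (norm := noncomm_ring) -h
  set u := d b
  set v := d e
  constructor
  · linear_combination (norm := noncomm_ring) e*E*(1-e) - he*u + (e*v)*be - (e*v)*eb + he*(u*e) - (e*u)*he + eb*(v*(1-e))
  · linear_combination (norm := noncomm_ring) -((1-e)*E*e) - u*he + (e*u)*he - he*(u*e) + eb*(v*e) - be*(v*e) + v*be - (e*v)*be


theorem threeLieDer_corner_identities {R : Type*} [CommRing R]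
    (htf : ∀ r : R, r + r = 0 → r = 0)
    {G : Type*} [Ring G] [Algebra R G] (e : G) (he : e * e = e)
    (φ : G → G → G → G) (hφ : IsLieDer3 R φ) :
    (∀ a1 a2 : G, corner e e a1 → corner e e a2 →
      (e * φ e a1 a2 * (1 - e) = a2 * (e * φ e a1 e * (1 - e)) ∧
       a2 * (e * φ e a1 e * (1 - e)) = a1 * (e * φ e e a2 * (1 - e)) ∧
       a1 * (e * φ e e a2 * (1 - e)) = a1 * a2 * (e * φ e e e * (1 - e)) ∧
       a1 * a2 * (e * φ e e e * (1 - e)) = a2 * a1 * (e * φ e e e * (1 - e))) ∧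
      ((1 - e) * φ e a1 a2 * e = ((1 - e) * φ e a1 e * e) * a2 ∧
       ((1 - e) * φ e a1 e * e) * a2 = ((1 - e) * φ e e a2 * e) * a1 ∧
       ((1 - e) * φ e e a2 * e) * a1 = ((1 - e) * φ e e e * e) * (a1 * a2) ∧
       ((1 - e) * φ e e e * e) * (a1 * a2) = ((1 - e) * φ e e e * e) * (a2 * a1))) ∧
    (∀ b1 b2 : G, corner (1 - e) (1 - e) b1 → corner (1 - e) (1 - e) b2 →
      (e * φ e b1 b2 * (1 - e) = -((e * φ e b1 e * (1 - e)) * b2) ∧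
       -((e * φ e b1 e * (1 - e)) * b2) = -((e * φ e e b2 * (1 - e)) * b1) ∧
       -((e * φ e e b2 * (1 - e)) * b1) = (e * φ e e e * (1 - e)) * (b1 * b2) ∧
       (e * φ e e e * (1 - e)) * (b1 * b2) = (e * φ e e e * (1 - e)) * (b2 * b1)) ∧
      ((1 - e) * φ e b1 b2 * e = -(b2 * ((1 - e) * φ e b1 e * e)) ∧
       -(b2 * ((1 - e) * φ e b1 e * e)) = -(b1 * ((1 - e) * φ e e b2 * e)) ∧
       -(b1 * ((1 - e) * φ e e b2 * e)) = b2 * b1 * ((1 - e) * φ e e e * e) ∧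
       b2 * b1 * ((1 - e) * φ e e e * e) = b1 * b2 * ((1 - e) * φ e e e * e))) := by
  obtain ⟨l1, l2, l3, d1, d2, d3⟩ := hφ
  have z2 : ∀ x z : G, φ x 0 z = 0 := fun x z => (l2 x z).map_zero
  have z3 : ∀ x y : G, φ x y 0 = 0 := fun x y => (l3 x y).map_zero
  constructor
  · intro a1 a2 ha1 ha2
    have p1 := (lieDerA he (z3 e a1) (d3 e a1) ha2).1
    have p2 := (lieDerA he (d := fun y => φ e y e) (z2 e e) (fun x y => d2 e e x y) ha1).1
    have p3 := (lieDerA he (d := fun y => φ e y a2) (z2 e a2) (fun x y => d2 e a2 x y) ha1).1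
    have p4 := (lieDerA he (z3 e e) (d3 e e) ha2).1
    have r1 := (lieDerA he (z3 e a1) (d3 e a1) ha2).2
    have r2 := (lieDerA he (d := fun y => φ e y e) (z2 e e) (fun x y => d2 e e x y) ha1).2
    have r3 := (lieDerA he (d := fun y => φ e y a2) (z2 e a2) (fun x y => d2 e a2 x y) ha1).2
    have r4 := (lieDerA he (z3 e e) (d3 e e) ha2).2
    have q : a2 * (a1 * (e * φ e e e * (1 - e))) = a1 * (a2 * (e * φ e e e * (1 - e))) := by
      rw [← p2, ← p1, p3, p4]
    have q' : ((1 - e) * φ e e e * e) * a1 * a2 = ((1 - e) * φ e e e * e) * a2 * a1 := by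
      rw [← r2, ← r1, r3, r4]
    refine ⟨⟨p1, ?_, ?_, ?_⟩, r1, ?_, ?_, ?_⟩
    · linear_combination (norm := noncomm_ring) p3 - p1
    · linear_combination (norm := noncomm_ring) a1*p4
    · linear_combination (norm := noncomm_ring) -q
    · linear_combination (norm := noncomm_ring) r3 - r1
    · linear_combination (norm := noncomm_ring) r4*a1 - q'
    · linear_combination (norm := noncomm_ring) q'
  · intro b1 b2 hb1 hb2
    have s1 := (lieDerB he (z3 e b1) (d3 e b1) hb2).1
    have s2 := (lieDerB he (d := fun y => φ e y e) (z2 e e) (fun x y => d2 e e x y) hb1).1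
    have s3 := (lieDerB he (d := fun y => φ e y b2) (z2 e b2) (fun x y => d2 e b2 x y) hb1).1
    have s4 := (lieDerB he (z3 e e) (d3 e e) hb2).1
    have w1 := (lieDerB he (z3 e b1) (d3 e b1) hb2).2
    have w2 := (lieDerB he (d := fun y => φ e y e) (z2 e e) (fun x y => d2 e e x y) hb1).2
    have w3 := (lieDerB he (d := fun y => φ e y b2) (z2 e b2) (fun x y => d2 e b2 x y) hb1).2
    have w4 := (lieDerB he (z3 e e) (d3 e e) hb2).2
    have t1 : e * φ e b1 b2 * (1 - e) = (e * φ e e e * (1 - e)) * b1 * b2 := by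
      rw [s1, s2, neg_mul, neg_neg]
    have t2 : e * φ e b1 b2 * (1 - e) = (e * φ e e e * (1 - e)) * b2 * b1 := by
      rw [s3, s4, neg_mul, neg_neg]
    have t1' : (1 - e) * φ e b1 b2 * e = b2 * (b1 * ((1 - e) * φ e e e * e)) := by
      rw [w1, w2, mul_neg, neg_neg]
    have t2' : (1 - e) * φ e b1 b2 * e = b1 * (b2 * ((1 - e) * φ e e e * e)) := by
      rw [w3, w4, mul_neg, neg_neg]
    refine ⟨⟨s1, ?_, ?_, ?_⟩, w1, ?_, ?_, ?_⟩
    · linear_combination (norm := noncomm_ring) s3 - s1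
    · linear_combination (norm := noncomm_ring) -(s4*b1) + t1 - t2
    · linear_combination (norm := noncomm_ring) t2 - t1
    · linear_combination (norm := noncomm_ring) w3 - w1
    · linear_combination (norm := noncomm_ring) -(b1*w4) + t1' - t2'
    · linear_combination (norm := noncomm_ring) t2' - t1'
end

section
/- Let G be a unital associative algebra over a commutative 2-torsionfree ring R, let e ∈ G be an idempotent, f = 1 - e, and let φ : G × G × G → G be a 3-Lie derivation. Then for all m ∈ eGf and n ∈ fGe: (i) e*φ(e,e,m)*e = e*φ(e,m,e)*e = e*φ(m,e,e)*e = -m*(f*φ(e,e,e)*e); (ii) f*φ(e,e,m)*f = f*φ(e,m,e)*f = f*φ(m,e,e)*f = (f*φ(e,e,e)*e)*m; (iii) e*φ(e,e,n)*e = e*φ(e,n,e)*e = e*φ(n,e,e)*e = -(e*φ(e,e,e)*f)*n; (iv) f*φ(e,e,n)*f = f*φ(e,n,e)*f = f*φ(n,e,e)*f = n*(e*φ(e,e,e)*f). -/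
lemma calcM {G : Type*} [Ring G] {e P m T : G} (he : e*e = e)
    (hem : e*m = m) (hme : m*e = 0)
    (hT : T = (P*m - m*P) + (e*T - T*e)) :
    e*T*e = -(m*((1-e)*P*e)) ∧ (1-e)*T*(1-e) = ((1-e)*P*e)*m := by
  have h1 : ∀ x : G, m * (e * x) = 0 := fun x => by rw [← mul_assoc, hme, zero_mul]
  have h2 : ∀ x : G, e * (m * x) = m * x := fun x => by rw [← mul_assoc, hem]
  have h3 : ∀ x : G, e * (e * x) = e * x := fun x => by rw [← mul_assoc, he]
  constructor <;>
  · conv_lhs => rw [hT]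
    simp [mul_sub, sub_mul, mul_add, add_mul, mul_assoc, he, hem, hme, h1, h2, h3]

lemma calcN {G : Type*} [Ring G] {e P n T : G} (he : e*e = e)
    (hne : n*e = n) (hen : e*n = 0)
    (hT : T = (T*e - e*T) + (n*P - P*n)) :
    e*T*e = -((e*P*(1-e))*n) ∧ (1-e)*T*(1-e) = n*(e*P*(1-e)) := by
  have h1 : ∀ x : G, e * (n * x) = 0 := fun x => by rw [← mul_assoc, hen, zero_mul]
  have h2 : ∀ x : G, n * (e * x) = n * x := fun x => by rw [← mul_assoc, hne]
  have h3 : ∀ x : G, e * (e * x) = e * x := fun x => by rw [← mul_assoc, he]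
  constructor <;>
  · conv_lhs => rw [hT]
    simp [mul_sub, sub_mul, mul_add, add_mul, mul_assoc, he, hne, hen, h1, h2, h3]


theorem threeLieDer_offdiag_identities {R : Type*} [CommRing R]
    (htf : ∀ r : R, r + r = 0 → r = 0)
    {G : Type*} [Ring G] [Algebra R G] (e : G) (he : e * e = e)
    (φ : G → G → G → G) (hφ : IsLieDer3 R φ) :
    (∀ m : G, corner e (1 - e) m →
      (e * φ e e m * e = e * φ e m e * e ∧
       e * φ e m e * e = e * φ m e e * e ∧
       e * φ m e e * e = -(m * ((1 - e) * φ e e e * e))) ∧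
      ((1 - e) * φ e e m * (1 - e) = (1 - e) * φ e m e * (1 - e) ∧
       (1 - e) * φ e m e * (1 - e) = (1 - e) * φ m e e * (1 - e) ∧
       (1 - e) * φ m e e * (1 - e) = ((1 - e) * φ e e e * e) * m)) ∧
    (∀ n : G, corner (1 - e) e n →
      (e * φ e e n * e = e * φ e n e * e ∧
       e * φ e n e * e = e * φ n e e * e ∧
       e * φ n e e * e = -((e * φ e e e * (1 - e)) * n)) ∧
      ((1 - e) * φ e e n * (1 - e) = (1 - e) * φ e n e * (1 - e) ∧
       (1 - e) * φ e n e * (1 - e) = (1 - e) * φ n e e * (1 - e) ∧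
       (1 - e) * φ n e e * (1 - e) = n * (e * φ e e e * (1 - e)))) := by
  obtain ⟨-, -, -, d1, d2, d3⟩ := hφ
  constructor
  · intro m hm
    have hem : e * m = m := by
      rw [← hm]; rw [show e*(e*m*(1-e)) = (e*e)*(m*(1-e)) by noncomm_ring, he,
        show e*(m*(1-e)) = e*m*(1-e) by rw [mul_assoc]]
    have hme : m * e = 0 := by
      rw [← hm, show e*m*(1-e)*e = e*m*(e - e*e) by noncomm_ring, he]; simp
    have hb : brk e m = m := by simp [brk, hem, hme]
    have h1 := d3 e e e m; rw [hb] at h1; simp only [brk] at h1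
    have h2 := d2 e e e m; rw [hb] at h2; simp only [brk] at h2
    have h3 := d1 e e e m; rw [hb] at h3; simp only [brk] at h3
    have c1 := calcM he hem hme h1
    have c2 := calcM he hem hme h2
    have c3 := calcM he hem hme h3
    exact ⟨⟨c1.1.trans c2.1.symm, c2.1.trans c3.1.symm, c3.1⟩,
      c1.2.trans c2.2.symm, c2.2.trans c3.2.symm, c3.2⟩
  · intro n hn
    have hne : n * e = n := by
      rw [← hn, show (1-e)*n*e*e = (1-e)*(n*(e*e)) by noncomm_ring, he,
        show (1-e)*(n*e) = (1-e)*n*e by rw [mul_assoc]]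
    have hen : e * n = 0 := by
      rw [← hn, show e*((1-e)*n*e) = (e - e*e)*(n*e) by noncomm_ring, he]; simp
    have hb : brk n e = n := by simp [brk, hne, hen]
    have h1 := d3 e e n e; rw [hb] at h1; simp only [brk] at h1
    have h2 := d2 e e n e; rw [hb] at h2; simp only [brk] at h2
    have h3 := d1 e e n e; rw [hb] at h3; simp only [brk] at h3
    have c1 := calcN he hne hen h1
    have c2 := calcN he hne hen h2
    have c3 := calcN he hne hen h3
    exact ⟨⟨c1.1.trans c2.1.symm, c2.1.trans c3.1.symm, c3.1⟩,
      c1.2.trans c2.2.symm, c2.2.trans c3.2.symm, c3.2⟩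
end

section
/- Let G be a generalized matrix algebra (as in the context) satisfying (H1) every element of Z(A) has the form e*w*e for some w ∈ Z(G) and every element of Z(B) has the form f*w*f for some w ∈ Z(G), and (H2) A contains no nonzero central ideal (there is no nonzero c ∈ Z(A) with a*c ∈ Z(A) for all a ∈ A) or B contains no nonzero central ideal (analogously in B). Let φ : G × G × G → G be a 3-Lie derivation and set m0 = e*φ(e,e,e)*f and n0 = f*φ(e,e,e)*e. Then for all a1, a2 ∈ A, b1, b2 ∈ B, m ∈ M and n ∈ N one has [a1,a2]*m0 = 0, m0*[b1,b2] = 0, [b1,b2]*n0 = 0, n0*[a1,a2] = 0, m0*n = 0, n*m0 = 0, n0*m = 0 and m*n0 = 0. -/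
lemma mahelp {G : Type*} [Ring G] {x y z : G} (h : x*y = z) : ∀ w, x*(y*w) = z*w :=
  fun w => by rw [← mul_assoc, h]

lemma cEE {G : Type*} [Ring G] {e a : G} (he : e*e = e) (ha : e*a*e = a) :
    e*a = a ∧ a*e = a := by
  constructor
  · linear_combination (norm := noncomm_ring) he*a*e + ha - e*ha
  · linear_combination (norm := noncomm_ring) e*a*he + ha - ha*e

lemma cEF {G : Type*} [Ring G] {e m : G} (he : e*e = e) (hm : e*m*(1-e) = m) :
    e*m = m ∧ m*e = 0 := by
  have me : m*e = 0 := by linear_combination (norm := noncomm_ring) - hm * e - e * m * he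
  exact ⟨by linear_combination (norm := noncomm_ring) hm + e * me, me⟩

lemma cFE {G : Type*} [Ring G] {e n : G} (he : e*e = e) (hn : (1-e)*n*e = n) :
    n*e = n ∧ e*n = 0 := by
  have en : e*n = 0 := by linear_combination (norm := noncomm_ring) - e * hn - he*n*e
  exact ⟨by linear_combination (norm := noncomm_ring) hn + en * e, en⟩

lemma cFF {G : Type*} [Ring G] {e b : G} (he : e*e = e) (hb : (1-e)*b*(1-e) = b) :
    e*b = 0 ∧ b*e = 0 := by
  have eb : e*b = 0 := by
    linear_combination (norm := noncomm_ring) - e*hb - he*b + he*b*e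
  exact ⟨eb, by linear_combination (norm := noncomm_ring) - hb - eb + eb*e⟩

section AuxThreeLie
variable {G : Type*} [Ring G]

lemma bigLemma (e : G) (he : e * e = e) (hf : Faithful e) (h2 : H2P e)
    (χ : G → G → G)
    (hz1 : ∀ y, χ 0 y = 0) (hz2 : ∀ x, χ x 0 = 0)
    (hn1 : ∀ x y, χ (-x) y = -(χ x y)) (hn2 : ∀ x y, χ x (-y) = -(χ x y))
    (D1 : ∀ y a b, χ (brk a b) y = brk (χ a y) b + brk a (χ b y))
    (D2 : ∀ x a b, χ x (brk a b) = brk (χ x a) b + brk a (χ x b)) :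
    (∀ a1 a2 : G, corner e e a1 → corner e e a2 →
      brk a1 a2 * (e * χ e e * (1 - e)) = 0 ∧
      ((1 - e) * χ e e * e) * brk a1 a2 = 0) ∧
    (∀ b1 b2 : G, corner (1 - e) (1 - e) b1 → corner (1 - e) (1 - e) b2 →
      (e * χ e e * (1 - e)) * brk b1 b2 = 0 ∧
      brk b1 b2 * ((1 - e) * χ e e * e) = 0) ∧
    (∀ n : G, corner (1 - e) e n →
      (e * χ e e * (1 - e)) * n = 0 ∧ n * (e * χ e e * (1 - e)) = 0) ∧
    (∀ m : G, corner e (1 - e) m →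
      ((1 - e) * χ e e * e) * m = 0 ∧ m * ((1 - e) * χ e e * e) = 0) := by
  have comp : ∀ (l r x y : G), x = y → l*x*r = l*y*r := fun l r x y h => by rw [h]
  -- bracket computations
  have bA : ∀ a : G, corner e e a → brk a e = 0 := by
    intro a ha
    obtain ⟨h1, h2⟩ := cEE he ha
    simp [brk, h1, h2]
  have bB : ∀ b : G, corner (1-e) (1-e) b → brk b e = 0 := by
    intro b hb
    obtain ⟨h1, h2⟩ := cFF he hb
    simp [brk, h1, h2]
  have bN : ∀ n : G, corner (1-e) e n → brk n e = n := by
    intro n hn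
    obtain ⟨h1, h2⟩ := cFE he hn
    simp [brk, h1, h2]
  have bM : ∀ m : G, corner e (1-e) m → brk m e = -m := by
    intro m hm
    obtain ⟨h1, h2⟩ := cEF he hm
    simp [brk, h1, h2]
  -- (i1)-(i4) : slot identities for a ∈ A
  have i1 : ∀ a : G, corner e e a →
      e * χ a e * (1-e) = a * (e * χ e e * (1-e)) := by
    intro a ha
    obtain ⟨hea, hae⟩ := cEE he ha
    have h := D1 e a e
    rw [bA a ha, hz1] at h
    have k := comp e (1-e) _ _ h
    simp only [brk, mul_sub, sub_mul, mul_add, add_mul, mul_one, one_mul, mul_zero,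
      zero_mul, mul_assoc, he, mahelp he, hea, mahelp hea, hae, mahelp hae] at k ⊢
    linear_combination (norm := noncomm_ring) k
  have i2 : ∀ a : G, corner e e a →
      e * χ e a * (1-e) = a * (e * χ e e * (1-e)) := by
    intro a ha
    obtain ⟨hea, hae⟩ := cEE he ha
    have h := D2 e a e
    rw [bA a ha, hz2] at h
    have k := comp e (1-e) _ _ h
    simp only [brk, mul_sub, sub_mul, mul_add, add_mul, mul_one, one_mul, mul_zero,
      zero_mul, mul_assoc, he, mahelp he, hea, mahelp hea, hae, mahelp hae] at k ⊢
    linear_combination (norm := noncomm_ring) k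
  have i3 : ∀ a : G, corner e e a →
      (1-e) * χ a e * e = ((1-e) * χ e e * e) * a := by
    intro a ha
    obtain ⟨hea, hae⟩ := cEE he ha
    have h := D1 e a e
    rw [bA a ha, hz1] at h
    have k := comp (1-e) e _ _ h
    simp only [brk, mul_sub, sub_mul, mul_add, add_mul, mul_one, one_mul, mul_zero,
      zero_mul, mul_assoc, he, mahelp he, hea, mahelp hea, hae, mahelp hae] at k ⊢
    linear_combination (norm := noncomm_ring) -k
  have i4 : ∀ a : G, corner e e a →
      (1-e) * χ e a * e = ((1-e) * χ e e * e) * a := by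
    intro a ha
    obtain ⟨hea, hae⟩ := cEE he ha
    have h := D2 e a e
    rw [bA a ha, hz2] at h
    have k := comp (1-e) e _ _ h
    simp only [brk, mul_sub, sub_mul, mul_add, add_mul, mul_one, one_mul, mul_zero,
      zero_mul, mul_assoc, he, mahelp he, hea, mahelp hea, hae, mahelp hae] at k ⊢
    linear_combination (norm := noncomm_ring) -k
  -- (i5)-(i8) : slot identities for b ∈ B
  have i5 : ∀ b : G, corner (1-e) (1-e) b →
      e * χ b e * (1-e) = -((e * χ e e * (1-e)) * b) := by
    intro b hb
    obtain ⟨heb, hbe⟩ := cFF he hb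
    have h := D1 e b e
    rw [bB b hb, hz1] at h
    have k := comp e (1-e) _ _ h
    simp only [brk, mul_sub, sub_mul, mul_add, add_mul, mul_one, one_mul, mul_zero,
      zero_mul, mul_assoc, he, mahelp he, heb, mahelp heb, hbe, mahelp hbe] at k ⊢
    linear_combination (norm := noncomm_ring) k
  have i6 : ∀ b : G, corner (1-e) (1-e) b →
      e * χ e b * (1-e) = -((e * χ e e * (1-e)) * b) := by
    intro b hb
    obtain ⟨heb, hbe⟩ := cFF he hb
    have h := D2 e b e
    rw [bB b hb, hz2] at h
    have k := comp e (1-e) _ _ h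
    simp only [brk, mul_sub, sub_mul, mul_add, add_mul, mul_one, one_mul, mul_zero,
      zero_mul, mul_assoc, he, mahelp he, heb, mahelp heb, hbe, mahelp hbe] at k ⊢
    linear_combination (norm := noncomm_ring) k
  have i7 : ∀ b : G, corner (1-e) (1-e) b →
      (1-e) * χ b e * e = -(b * ((1-e) * χ e e * e)) := by
    intro b hb
    obtain ⟨heb, hbe⟩ := cFF he hb
    have h := D1 e b e
    rw [bB b hb, hz1] at h
    have k := comp (1-e) e _ _ h
    simp only [brk, mul_sub, sub_mul, mul_add, add_mul, mul_one, one_mul, mul_zero,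
      zero_mul, mul_assoc, he, mahelp he, heb, mahelp heb, hbe, mahelp hbe] at k ⊢
    linear_combination (norm := noncomm_ring) -k
  have i8 : ∀ b : G, corner (1-e) (1-e) b →
      (1-e) * χ e b * e = -(b * ((1-e) * χ e e * e)) := by
    intro b hb
    obtain ⟨heb, hbe⟩ := cFF he hb
    have h := D2 e b e
    rw [bB b hb, hz2] at h
    have k := comp (1-e) e _ _ h
    simp only [brk, mul_sub, sub_mul, mul_add, add_mul, mul_one, one_mul, mul_zero,
      zero_mul, mul_assoc, he, mahelp he, heb, mahelp heb, hbe, mahelp hbe] at k ⊢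
    linear_combination (norm := noncomm_ring) -k

  -- diagonal components for n ∈ N
  have i13 : ∀ n : G, corner (1-e) e n →
      (e * χ n e * e = -((e * χ e e * (1-e)) * n) ∧
       (1-e) * χ n e * (1-e) = n * (e * χ e e * (1-e))) := by
    intro n hn
    obtain ⟨hne, hen⟩ := cFE he hn
    have h := D1 e n e
    rw [bN n hn] at h
    have k1 := comp e e _ _ h
    have k2 := comp (1-e) (1-e) _ _ h
    constructor
    · simp only [brk, mul_sub, sub_mul, mul_add, add_mul, mul_one, one_mul, mul_zero,
        zero_mul, mul_assoc, he, mahelp he, hne, mahelp hne, hen, mahelp hen] at k1 ⊢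
      linear_combination (norm := noncomm_ring) k1
    · simp only [brk, mul_sub, sub_mul, mul_add, add_mul, mul_one, one_mul, mul_zero,
        zero_mul, mul_assoc, he, mahelp he, hne, mahelp hne, hen, mahelp hen] at k2 ⊢
      linear_combination (norm := noncomm_ring) k2
  have i14 : ∀ n : G, corner (1-e) e n →
      (e * χ e n * e = -((e * χ e e * (1-e)) * n) ∧
       (1-e) * χ e n * (1-e) = n * (e * χ e e * (1-e))) := by
    intro n hn
    obtain ⟨hne, hen⟩ := cFE he hn
    have h := D2 e n e
    rw [bN n hn] at h
    have k1 := comp e e _ _ h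
    have k2 := comp (1-e) (1-e) _ _ h
    constructor
    · simp only [brk, mul_sub, sub_mul, mul_add, add_mul, mul_one, one_mul, mul_zero,
        zero_mul, mul_assoc, he, mahelp he, hne, mahelp hne, hen, mahelp hen] at k1 ⊢
      linear_combination (norm := noncomm_ring) k1
    · simp only [brk, mul_sub, sub_mul, mul_add, add_mul, mul_one, one_mul, mul_zero,
        zero_mul, mul_assoc, he, mahelp he, hne, mahelp hne, hen, mahelp hen] at k2 ⊢
      linear_combination (norm := noncomm_ring) k2
  -- diagonal components for m ∈ M
  have i15 : ∀ m : G, corner e (1-e) m →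
      (e * χ m e * e = -(m * ((1-e) * χ e e * e)) ∧
       (1-e) * χ m e * (1-e) = ((1-e) * χ e e * e) * m) := by
    intro m hm
    obtain ⟨hem, hme⟩ := cEF he hm
    have h := D1 e m e
    rw [bM m hm, hn1] at h
    have k1 := comp e e _ _ h
    have k2 := comp (1-e) (1-e) _ _ h
    constructor
    · simp only [brk, mul_sub, sub_mul, mul_add, add_mul, mul_one, one_mul, mul_zero,
        zero_mul, mul_neg, neg_mul, mul_assoc, he, mahelp he, hem, mahelp hem,
        hme, mahelp hme] at k1 ⊢
      linear_combination (norm := noncomm_ring) -k1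
    · simp only [brk, mul_sub, sub_mul, mul_add, add_mul, mul_one, one_mul, mul_zero,
        zero_mul, mul_neg, neg_mul, mul_assoc, he, mahelp he, hem, mahelp hem,
        hme, mahelp hme] at k2 ⊢
      linear_combination (norm := noncomm_ring) -k2
  have i16 : ∀ m : G, corner e (1-e) m →
      (e * χ e m * e = -(m * ((1-e) * χ e e * e)) ∧
       (1-e) * χ e m * (1-e) = ((1-e) * χ e e * e) * m) := by
    intro m hm
    obtain ⟨hem, hme⟩ := cEF he hm
    have h := D2 e m e
    rw [bM m hm, hn2] at h
    have k1 := comp e e _ _ h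
    have k2 := comp (1-e) (1-e) _ _ h
    constructor
    · simp only [brk, mul_sub, sub_mul, mul_add, add_mul, mul_one, one_mul, mul_zero,
        zero_mul, mul_neg, neg_mul, mul_assoc, he, mahelp he, hem, mahelp hem,
        hme, mahelp hme] at k1 ⊢
      linear_combination (norm := noncomm_ring) -k1
    · simp only [brk, mul_sub, sub_mul, mul_add, add_mul, mul_one, one_mul, mul_zero,
        zero_mul, mul_neg, neg_mul, mul_assoc, he, mahelp he, hem, mahelp hem,
        hme, mahelp hme] at k2 ⊢
      linear_combination (norm := noncomm_ring) -k2

  -- centrality of m0*n, n*m0, m*n0, n0*m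
  have zA : ∀ n : G, corner (1-e) e n → ∀ a : G, corner e e a →
      ((e * χ e e * (1-e)) * n) * a = a * ((e * χ e e * (1-e)) * n) := by
    intro n hn a ha
    obtain ⟨hne, hen⟩ := cFE he hn
    obtain ⟨hea, hae⟩ := cEE he ha
    have h := D2 n a e
    rw [bA a ha, hz2] at h
    have k := comp e e _ _ h
    have ja := congrArg (fun x => a * x) (i13 n hn).1
    have jb := congrArg (fun x => x * a) (i13 n hn).1
    simp only [brk, mul_sub, sub_mul, mul_add, add_mul, mul_one, one_mul, mul_zero,
      zero_mul, mul_neg, neg_mul, mul_assoc, he, mahelp he, hne, mahelp hne, hen,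
      mahelp hen, hea, mahelp hea, hae, mahelp hae] at k ja jb ⊢
    linear_combination (norm := noncomm_ring) jb - ja - k
  have zB : ∀ n : G, corner (1-e) e n → ∀ b : G, corner (1-e) (1-e) b →
      (n * (e * χ e e * (1-e))) * b = b * (n * (e * χ e e * (1-e))) := by
    intro n hn b hb
    obtain ⟨hne, hen⟩ := cFE he hn
    obtain ⟨heb, hbe⟩ := cFF he hb
    have h := D2 n b e
    rw [bB b hb, hz2] at h
    have k := comp (1-e) (1-e) _ _ h
    have ja := congrArg (fun x => b * x) (i13 n hn).2
    have jb := congrArg (fun x => x * b) (i13 n hn).2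
    simp only [brk, mul_sub, sub_mul, mul_add, add_mul, mul_one, one_mul, mul_zero,
      zero_mul, mul_neg, neg_mul, mul_assoc, he, mahelp he, hne, mahelp hne, hen,
      mahelp hen, heb, mahelp heb, hbe, mahelp hbe] at k ja jb ⊢
    linear_combination (norm := noncomm_ring) k - jb + ja
  have zA' : ∀ m : G, corner e (1-e) m → ∀ a : G, corner e e a →
      (m * ((1-e) * χ e e * e)) * a = a * (m * ((1-e) * χ e e * e)) := by
    intro m hm a ha
    obtain ⟨hem, hme⟩ := cEF he hm
    obtain ⟨hea, hae⟩ := cEE he ha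
    have h := D2 m a e
    rw [bA a ha, hz2] at h
    have k := comp e e _ _ h
    have ja := congrArg (fun x => a * x) (i15 m hm).1
    have jb := congrArg (fun x => x * a) (i15 m hm).1
    simp only [brk, mul_sub, sub_mul, mul_add, add_mul, mul_one, one_mul, mul_zero,
      zero_mul, mul_neg, neg_mul, mul_assoc, he, mahelp he, hem, mahelp hem, hme,
      mahelp hme, hea, mahelp hea, hae, mahelp hae] at k ja jb ⊢
    linear_combination (norm := noncomm_ring) jb - ja - k
  have zB' : ∀ m : G, corner e (1-e) m → ∀ b : G, corner (1-e) (1-e) b →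
      (((1-e) * χ e e * e) * m) * b = b * (((1-e) * χ e e * e) * m) := by
    intro m hm b hb
    obtain ⟨hem, hme⟩ := cEF he hm
    obtain ⟨heb, hbe⟩ := cFF he hb
    have h := D2 m b e
    rw [bB b hb, hz2] at h
    have k := comp (1-e) (1-e) _ _ h
    have ja := congrArg (fun x => b * x) (i15 m hm).2
    have jb := congrArg (fun x => x * b) (i15 m hm).2
    simp only [brk, mul_sub, sub_mul, mul_add, add_mul, mul_one, one_mul, mul_zero,
      zero_mul, mul_neg, neg_mul, mul_assoc, he, mahelp he, hem, mahelp hem, hme,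
      mahelp hme, heb, mahelp heb, hbe, mahelp hbe] at k ja jb ⊢
    linear_combination (norm := noncomm_ring) k - jb + ja
  -- the linking identity
  have star : ∀ m n : G, corner e (1-e) m → corner (1-e) e n →
      ((e * χ e e * (1-e)) * n) * m + m * (n * (e * χ e e * (1-e))) = 0 := by
    intro m n hm hn
    obtain ⟨hem, hme⟩ := cEF he hm
    obtain ⟨hne, hen⟩ := cFE he hn
    have hbem : brk e m = m := by simp [brk, hem, hme]
    have h := D1 n e m
    rw [hbem] at h
    have k := comp e (1-e) _ _ h
    have j1m := congrArg (fun x => x * m) (i14 n hn).1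
    have j2m := congrArg (fun x => m * x) (i14 n hn).2
    simp only [brk, mul_sub, sub_mul, mul_add, add_mul, mul_one, one_mul, mul_zero,
      zero_mul, mul_neg, neg_mul, mul_assoc, he, mahelp he, hem, mahelp hem, hme,
      mahelp hme, hne, mahelp hne, hen, mahelp hen] at k j1m j2m ⊢
    linear_combination (norm := noncomm_ring) j1m - j2m + k
  -- corner facts
  have P1 : ∀ n : G, corner (1-e) e n → corner e e ((e * χ e e * (1-e)) * n) := by
    intro n hn
    obtain ⟨hne, hen⟩ := cFE he hn
    show _ = _
    simp only [mul_sub, sub_mul, mul_add, add_mul, mul_one, one_mul, mul_zero,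
      zero_mul, mul_assoc, he, mahelp he, hne, mahelp hne, hen, mahelp hen]
    all_goals linear_combination (norm := noncomm_ring)
  have P2 : ∀ n : G, corner (1-e) e n →
      corner (1-e) (1-e) (n * (e * χ e e * (1-e))) := by
    intro n hn
    obtain ⟨hne, hen⟩ := cFE he hn
    show _ = _
    simp only [mul_sub, sub_mul, mul_add, add_mul, mul_one, one_mul, mul_zero,
      zero_mul, mul_assoc, he, mahelp he, hne, mahelp hne, hen, mahelp hen]
    all_goals linear_combination (norm := noncomm_ring)
  have P3 : ∀ m : G, corner e (1-e) m → corner e e (m * ((1-e) * χ e e * e)) := by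
    intro m hm
    obtain ⟨hem, hme⟩ := cEF he hm
    show _ = _
    simp only [mul_sub, sub_mul, mul_add, add_mul, mul_one, one_mul, mul_zero,
      zero_mul, mul_assoc, he, mahelp he, hem, mahelp hem, hme, mahelp hme]
    all_goals linear_combination (norm := noncomm_ring)
  have P4 : ∀ m : G, corner e (1-e) m →
      corner (1-e) (1-e) (((1-e) * χ e e * e) * m) := by
    intro m hm
    obtain ⟨hem, hme⟩ := cEF he hm
    show _ = _
    simp only [mul_sub, sub_mul, mul_add, add_mul, mul_one, one_mul, mul_zero,
      zero_mul, mul_assoc, he, mahelp he, hem, mahelp hem, hme, mahelp hme]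
    all_goals linear_combination (norm := noncomm_ring)
  have P5 : ∀ n a : G, corner (1-e) e n → corner e e a → corner (1-e) e (n * a) := by
    intro n a hn ha
    obtain ⟨hne, hen⟩ := cFE he hn
    obtain ⟨hea, hae⟩ := cEE he ha
    show _ = _
    simp only [mul_sub, sub_mul, mul_add, add_mul, mul_one, one_mul, mul_zero,
      zero_mul, mul_assoc, he, mahelp he, hne, mahelp hne, hen, mahelp hen,
      hea, mahelp hea, hae, mahelp hae]
    all_goals linear_combination (norm := noncomm_ring)
  have P6 : ∀ a m : G, corner e e a → corner e (1-e) m → corner e (1-e) (a * m) := by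
    intro a m ha hm
    obtain ⟨hem, hme⟩ := cEF he hm
    obtain ⟨hea, hae⟩ := cEE he ha
    show _ = _
    simp only [mul_sub, sub_mul, mul_add, add_mul, mul_one, one_mul, mul_zero,
      zero_mul, mul_assoc, he, mahelp he, hem, mahelp hem, hme, mahelp hme,
      hea, mahelp hea, hae, mahelp hae]
    all_goals linear_combination (norm := noncomm_ring)
  have P7 : ∀ b n : G, corner (1-e) (1-e) b → corner (1-e) e n →
      corner (1-e) e (b * n) := by
    intro b n hb hn
    obtain ⟨hne, hen⟩ := cFE he hn
    obtain ⟨heb, hbe⟩ := cFF he hb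
    show _ = _
    simp only [mul_sub, sub_mul, mul_add, add_mul, mul_one, one_mul, mul_zero,
      zero_mul, mul_assoc, he, mahelp he, hne, mahelp hne, hen, mahelp hen,
      heb, mahelp heb, hbe, mahelp hbe]
    all_goals linear_combination (norm := noncomm_ring)
  have P8 : ∀ m b : G, corner e (1-e) m → corner (1-e) (1-e) b →
      corner e (1-e) (m * b) := by
    intro m b hm hb
    obtain ⟨hem, hme⟩ := cEF he hm
    obtain ⟨heb, hbe⟩ := cFF he hb
    show _ = _
    simp only [mul_sub, sub_mul, mul_add, add_mul, mul_one, one_mul, mul_zero,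
      zero_mul, mul_assoc, he, mahelp he, hem, mahelp hem, hme, mahelp hme,
      heb, mahelp heb, hbe, mahelp hbe]
    all_goals linear_combination (norm := noncomm_ring)
  -- main case analysis
  have main : (∀ n : G, corner (1-e) e n →
      (e * χ e e * (1-e)) * n = 0 ∧ n * (e * χ e e * (1-e)) = 0) ∧
      (∀ m : G, corner e (1-e) m →
      ((1-e) * χ e e * e) * m = 0 ∧ m * ((1-e) * χ e e * e) = 0) := by
    rcases h2 with hci | hci
    · have hm0n : ∀ n : G, corner (1-e) e n → (e * χ e e * (1-e)) * n = 0 := by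
        intro n hn
        by_contra hne0
        refine hci ⟨(e * χ e e * (1-e)) * n, hne0, ⟨P1 n hn, fun a' ha' => zA n hn a' ha'⟩,
          fun a ha => ⟨?_, ?_⟩⟩
        · obtain ⟨hea, hae⟩ := cEE he ha
          obtain ⟨hne, hen⟩ := cFE he hn
          show _ = _
          simp only [mul_sub, sub_mul, mul_add, add_mul, mul_one, one_mul, mul_zero,
            zero_mul, mul_assoc, he, mahelp he, hne, mahelp hne, hen, mahelp hen,
            hea, mahelp hea, hae, mahelp hae]
          all_goals linear_combination (norm := noncomm_ring)
        · intro a' ha'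
          have key : a * ((e * χ e e * (1-e)) * n) = (e * χ e e * (1-e)) * (n * a) :=
            (zA n hn a ha).symm.trans (mul_assoc _ _ _)
          rw [key]
          exact zA (n * a) (P5 n a hn ha) a' ha'
      have hmn0 : ∀ m : G, corner e (1-e) m → m * ((1-e) * χ e e * e) = 0 := by
        intro m hm
        by_contra hne0
        refine hci ⟨m * ((1-e) * χ e e * e), hne0, ⟨P3 m hm, fun a' ha' => zA' m hm a' ha'⟩,
          fun a ha => ⟨?_, ?_⟩⟩
        · obtain ⟨hea, hae⟩ := cEE he ha
          obtain ⟨hem, hme⟩ := cEF he hm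
          show _ = _
          simp only [mul_sub, sub_mul, mul_add, add_mul, mul_one, one_mul, mul_zero,
            zero_mul, mul_assoc, he, mahelp he, hem, mahelp hem, hme, mahelp hme,
            hea, mahelp hea, hae, mahelp hae]
          all_goals linear_combination (norm := noncomm_ring)
        · intro a' ha'
          have key : a * (m * ((1-e) * χ e e * e)) = (a * m) * ((1-e) * χ e e * e) :=
            (mul_assoc _ _ _).symm
          rw [key]
          exact zA' (a * m) (P6 a m ha hm) a' ha'
      have hnm0 : ∀ n : G, corner (1-e) e n → n * (e * χ e e * (1-e)) = 0 := by
        intro n hn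
        refine hf.2 _ (P2 n hn) (fun m hm => ?_)
        linear_combination (norm := noncomm_ring) star m n hm hn - hm0n n hn * m
      have hn0m : ∀ m : G, corner e (1-e) m → ((1-e) * χ e e * e) * m = 0 := by
        intro m hm
        refine hf.2 _ (P4 m hm) (fun m' hm' => ?_)
        linear_combination (norm := noncomm_ring) hmn0 m' hm' * m
      exact ⟨fun n hn => ⟨hm0n n hn, hnm0 n hn⟩, fun m hm => ⟨hn0m m hm, hmn0 m hm⟩⟩
    · have hnm0 : ∀ n : G, corner (1-e) e n → n * (e * χ e e * (1-e)) = 0 := by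
        intro n hn
        by_contra hne0
        refine hci ⟨n * (e * χ e e * (1-e)), hne0, ⟨P2 n hn, fun b' hb' => zB n hn b' hb'⟩,
          fun b hb => ⟨?_, ?_⟩⟩
        · obtain ⟨heb, hbe⟩ := cFF he hb
          obtain ⟨hne, hen⟩ := cFE he hn
          show _ = _
          simp only [mul_sub, sub_mul, mul_add, add_mul, mul_one, one_mul, mul_zero,
            zero_mul, mul_assoc, he, mahelp he, hne, mahelp hne, hen, mahelp hen,
            heb, mahelp heb, hbe, mahelp hbe]
          all_goals linear_combination (norm := noncomm_ring)
        · intro b' hb'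
          have key : b * (n * (e * χ e e * (1-e))) = (b * n) * (e * χ e e * (1-e)) :=
            (mul_assoc _ _ _).symm
          rw [key]
          exact zB (b * n) (P7 b n hb hn) b' hb'
      have hn0m : ∀ m : G, corner e (1-e) m → ((1-e) * χ e e * e) * m = 0 := by
        intro m hm
        by_contra hne0
        refine hci ⟨((1-e) * χ e e * e) * m, hne0, ⟨P4 m hm, fun b' hb' => zB' m hm b' hb'⟩,
          fun b hb => ⟨?_, ?_⟩⟩
        · obtain ⟨heb, hbe⟩ := cFF he hb
          obtain ⟨hem, hme⟩ := cEF he hm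
          show _ = _
          simp only [mul_sub, sub_mul, mul_add, add_mul, mul_one, one_mul, mul_zero,
            zero_mul, mul_assoc, he, mahelp he, hem, mahelp hem, hme, mahelp hme,
            heb, mahelp heb, hbe, mahelp hbe]
          all_goals linear_combination (norm := noncomm_ring)
        · intro b' hb'
          have key : b * (((1-e) * χ e e * e) * m) = ((1-e) * χ e e * e) * (m * b) :=
            (zB' m hm b hb).symm.trans (mul_assoc _ _ _)
          rw [key]
          exact zB' (m * b) (P8 m b hm hb) b' hb'
      have hm0n : ∀ n : G, corner (1-e) e n → (e * χ e e * (1-e)) * n = 0 := by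
        intro n hn
        refine hf.1 _ (P1 n hn) (fun m hm => ?_)
        linear_combination (norm := noncomm_ring) star m n hm hn - m * hnm0 n hn
      have hmn0 : ∀ m : G, corner e (1-e) m → m * ((1-e) * χ e e * e) = 0 := by
        intro m hm
        refine hf.1 _ (P3 m hm) (fun m' hm' => ?_)
        linear_combination (norm := noncomm_ring) m * hn0m m' hm'
      exact ⟨fun n hn => ⟨hm0n n hn, hnm0 n hn⟩, fun m hm => ⟨hn0m m hm, hmn0 m hm⟩⟩
  -- bracket conclusions
  refine ⟨?_, ?_, main.1, main.2⟩
  · intro a1 a2 ha1 ha2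
    obtain ⟨hea1, hae1⟩ := cEE he ha1
    obtain ⟨hea2, hae2⟩ := cEE he ha2
    have h := D2 a1 a2 e
    rw [bA a2 ha2, hz2] at h
    have h' := D1 a2 a1 e
    rw [bA a1 ha1, hz1] at h'
    constructor
    · have kE := comp e (1-e) _ _ h
      have kE' := comp e (1-e) _ _ h'
      have ja := congrArg (fun x => a2 * x) (i1 a1 ha1)
      have jb := congrArg (fun x => a1 * x) (i2 a2 ha2)
      simp only [brk, mul_sub, sub_mul, mul_add, add_mul, mul_one, one_mul, mul_zero,
        zero_mul, mul_assoc, he, mahelp he, hea1, mahelp hea1, hae1, mahelp hae1,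
        hea2, mahelp hea2, hae2, mahelp hae2] at kE kE' ja jb ⊢
      linear_combination (norm := noncomm_ring) ja - jb + kE - kE'
    · have kF := comp (1-e) e _ _ h
      have kF' := comp (1-e) e _ _ h'
      have ja := congrArg (fun x => x * a2) (i3 a1 ha1)
      have jb := congrArg (fun x => x * a1) (i4 a2 ha2)
      simp only [brk, mul_sub, sub_mul, mul_add, add_mul, mul_one, one_mul, mul_zero,
        zero_mul, mul_assoc, he, mahelp he, hea1, mahelp hea1, hae1, mahelp hae1,
        hea2, mahelp hea2, hae2, mahelp hae2] at kF kF' ja jb ⊢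
      linear_combination (norm := noncomm_ring) jb - ja + kF - kF'
  · intro b1 b2 hb1 hb2
    obtain ⟨heb1, hbe1⟩ := cFF he hb1
    obtain ⟨heb2, hbe2⟩ := cFF he hb2
    have h := D2 b1 b2 e
    rw [bB b2 hb2, hz2] at h
    have h' := D1 b2 b1 e
    rw [bB b1 hb1, hz1] at h'
    constructor
    · have kE := comp e (1-e) _ _ h
      have kE' := comp e (1-e) _ _ h'
      have ja := congrArg (fun x => x * b2) (i5 b1 hb1)
      have jb := congrArg (fun x => x * b1) (i6 b2 hb2)
      simp only [brk, mul_sub, sub_mul, mul_add, add_mul, mul_one, one_mul, mul_zero,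
        zero_mul, mul_neg, neg_mul, mul_assoc, he, mahelp he, heb1, mahelp heb1,
        hbe1, mahelp hbe1, heb2, mahelp heb2, hbe2, mahelp hbe2] at kE kE' ja jb ⊢
      linear_combination (norm := noncomm_ring) ja - jb - kE + kE'
    · have kF := comp (1-e) e _ _ h
      have kF' := comp (1-e) e _ _ h'
      have ja := congrArg (fun x => b2 * x) (i7 b1 hb1)
      have jb := congrArg (fun x => b1 * x) (i8 b2 hb2)
      simp only [brk, mul_sub, sub_mul, mul_add, add_mul, mul_one, one_mul, mul_zero,
        zero_mul, mul_neg, neg_mul, mul_assoc, he, mahelp he, heb1, mahelp heb1,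
        hbe1, mahelp hbe1, heb2, mahelp heb2, hbe2, mahelp hbe2] at kF kF' ja jb ⊢
      linear_combination (norm := noncomm_ring) jb - ja - kF + kF'
end AuxThreeLie


theorem threeLieDer_m0_n0_annihilation {R : Type*} [CommRing R]
    (htf : ∀ r : R, r + r = 0 → r = 0)
    {G : Type*} [Ring G] [Algebra R G] (e : G) (he : e * e = e)
    (he0 : e ≠ 0) (he1 : e ≠ 1) (hf : Faithful e)
    (h1 : H1P e) (h2 : H2P e)
    (φ : G → G → G → G) (hφ : IsLieDer3 R φ) :
    (∀ a1 a2 : G, corner e e a1 → corner e e a2 →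
      brk a1 a2 * (e * φ e e e * (1 - e)) = 0 ∧
      ((1 - e) * φ e e e * e) * brk a1 a2 = 0) ∧
    (∀ b1 b2 : G, corner (1 - e) (1 - e) b1 → corner (1 - e) (1 - e) b2 →
      (e * φ e e e * (1 - e)) * brk b1 b2 = 0 ∧
      brk b1 b2 * ((1 - e) * φ e e e * e) = 0) ∧
    (∀ n : G, corner (1 - e) e n →
      (e * φ e e e * (1 - e)) * n = 0 ∧ n * (e * φ e e e * (1 - e)) = 0) ∧
    (∀ m : G, corner e (1 - e) m →
      ((1 - e) * φ e e e * e) * m = 0 ∧ m * ((1 - e) * φ e e e * e) = 0) := by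
  exact bigLemma e he hf h2 (fun x y => φ x y e)
    (fun y => (hφ.1 y e).map_zero) (fun x => (hφ.2.1 x e).map_zero)
    (fun x y => (hφ.1 y e).map_neg x) (fun x y => (hφ.2.1 x e).map_neg y)
    (fun y a b => hφ.2.2.2.1 y e a b) (fun x a b => hφ.2.2.2.2.1 x e a b)
end

section
/- Let G be a generalized matrix algebra (as in the context) and let n ≥ 2. Then G admits a nonzero extremal n-derivation, i.e. there exists x0 ∈ G with [[u,v],x0] = 0 for all u,v ∈ G such that the n-linear map κ(x1,…,xn) = [x1,[x2,…,[xn,x0]…]] is not identically zero, if and only if there exist m0 ∈ M and n0 ∈ N, not both zero, such that: (i) [a1,a2]*m0 = 0 = m0*[b1,b2] and n0*[a1,a2] = 0 = [b1,b2]*n0 for all a1,a2 ∈ A and b1,b2 ∈ B; and (ii) m0*n = 0 = n*m0 and n0*m = 0 = m*n0 for all m ∈ M and n ∈ N. -/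
section ExtAux
variable {G : Type*} [Ring G]

lemma ext_cor_absorb_left {p q x : G} (hp : p*p = p) (hx : corner p q x) : p * x = x := by
  conv_lhs => rw [← hx]
  rw [show p*(p*x*q) = (p*p)*x*q from by noncomm_ring, hp]
  exact hx

lemma ext_cor_absorb_right {p q x : G} (hq : q*q = q) (hx : corner p q x) : x * q = x := by
  conv_lhs => rw [← hx]
  rw [show (p*x*q)*q = p*x*(q*q) from by noncomm_ring, hq]
  exact hx

lemma ext_cor_kill_left {p q r x : G} (h : r*p = 0) (hx : corner p q x) : r * x = 0 := by
  conv_lhs => rw [← hx]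
  rw [show r*(p*x*q) = (r*p)*(x*q) from by noncomm_ring, h, zero_mul]

lemma ext_cor_kill_right {p q r x : G} (h : q*r = 0) (hx : corner p q x) : x * r = 0 := by
  conv_lhs => rw [← hx]
  rw [show (p*x*q)*r = (p*x)*(q*r) from by noncomm_ring, h, mul_zero]

lemma ext_cor_mk {p q : G} (hp : p*p = p) (hq : q*q = q) (w : G) : corner p q (p*w*q) := by
  show p*(p*w*q)*q = p*w*q
  rw [show p*(p*w*q)*q = (p*p)*w*(q*q) from by noncomm_ring, hp, hq]

lemma ext_cor_mul {p q r x y : G} (hp : p*p = p) (hr : r*r = r)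
    (hx : corner p q x) (hy : corner q r y) : corner p r (x*y) := by
  show p*(x*y)*r = x*y
  rw [show p*(x*y)*r = (p*x)*(y*r) from by noncomm_ring,
      ext_cor_absorb_left hp hx, ext_cor_absorb_right hr hy]

lemma ext_cor_sub {p q x y : G} (hx : corner p q x) (hy : corner p q y) :
    corner p q (x - y) := by
  show p*(x-y)*q = x - y
  rw [show p*(x-y)*q = p*x*q - p*y*q from by noncomm_ring, hx, hy]

lemma ext_cor_mul_zero {p q q' r x y : G} (hx : corner p q x) (hy : corner q' r y)
    (h : q*q' = 0) : x * y = 0 := by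
  rw [← hx, ← hy,
      show (p*x*q)*(q'*y*r) = (p*x)*((q*q')*(y*r)) from by noncomm_ring, h, zero_mul, mul_zero]

variable {e : G}

lemma ext_ff (he : e*e = e) : (1-e)*(1-e) = (1-e) := by
  rw [show (1-e)*(1-e) = 1 - e - e + e*e from by noncomm_ring, he]
  abel

lemma ext_ef (he : e*e = e) : e*(1-e) = 0 := by
  rw [show e*(1-e) = e - e*e from by noncomm_ring, he, sub_self]

lemma ext_fe (he : e*e = e) : (1-e)*e = 0 := by
  rw [show (1-e)*e = e - e*e from by noncomm_ring, he, sub_self]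

lemma ext_peirce (e g : G) : g = e*g*e + e*g*(1-e) + (1-e)*g*e + (1-e)*g*(1-e) := by
  noncomm_ring

lemma ext_exp_ee (he : e*e = e) (u v : G) :
    e*(u*v)*e = (e*u*e)*(e*v*e) + (e*u*(1-e))*((1-e)*v*e) := by
  have h : (e*u*e)*(e*v*e) + (e*u*(1-e))*((1-e)*v*e)
      = e*u*(e*e)*v*e + e*u*((1-e)*(1-e))*v*e := by noncomm_ring
  rw [h, he, ext_ff he]
  noncomm_ring

lemma ext_exp_ff (he : e*e = e) (u v : G) :
    (1-e)*(u*v)*(1-e) = ((1-e)*u*e)*(e*v*(1-e)) + ((1-e)*u*(1-e))*((1-e)*v*(1-e)) := by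
  have h : ((1-e)*u*e)*(e*v*(1-e)) + ((1-e)*u*(1-e))*((1-e)*v*(1-e))
      = (1-e)*u*(e*e)*v*(1-e) + (1-e)*u*((1-e)*(1-e))*v*(1-e) := by noncomm_ring
  rw [h, he, ext_ff he]
  noncomm_ring

end ExtAux



theorem extremal_nDerivation_iff {R : Type*} [CommRing R]
    (htf : ∀ r : R, r + r = 0 → r = 0)
    {G : Type*} [Ring G] [Algebra R G] (e : G) (he : e * e = e)
    (he0 : e ≠ 0) (he1 : e ≠ 1) (hf : Faithful e)
    (n : ℕ) (hn : 2 ≤ n) :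
    (∃ x0 : G, (∀ u v : G, brk (brk u v) x0 = 0) ∧
        ∃ x : Fin n → G, iterBr x x0 ≠ 0) ↔
    ∃ m0 n0 : G, corner e (1 - e) m0 ∧ corner (1 - e) e n0 ∧
      (m0 ≠ 0 ∨ n0 ≠ 0) ∧
      (∀ a1 a2 : G, corner e e a1 → corner e e a2 →
        brk a1 a2 * m0 = 0 ∧ n0 * brk a1 a2 = 0) ∧
      (∀ b1 b2 : G, corner (1 - e) (1 - e) b1 → corner (1 - e) (1 - e) b2 →
        m0 * brk b1 b2 = 0 ∧ brk b1 b2 * n0 = 0) ∧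
      (∀ nn : G, corner (1 - e) e nn → m0 * nn = 0 ∧ nn * m0 = 0) ∧
      (∀ m : G, corner e (1 - e) m → n0 * m = 0 ∧ m * n0 = 0) := by
  have hff := ext_ff he
  have hef := ext_ef he
  have hfe := ext_fe he
  constructor
  · rintro ⟨x0, hx0, x, hx⟩
    have hMx : ∀ m, corner e (1-e) m → m * x0 = x0 * m := by
      intro m hm
      have h := hx0 e m
      have hbem : brk e m = m := by
        show e*m - m*e = m
        rw [ext_cor_absorb_left he hm, ext_cor_kill_right hfe hm, sub_zero]
      rw [hbem] at h
      have h' : m*x0 - x0*m = 0 := h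
      exact sub_eq_zero.mp h'
    have hNx : ∀ nn, corner (1-e) e nn → nn * x0 = x0 * nn := by
      intro nn hnn
      have h := hx0 e nn
      have hben : brk e nn = -nn := by
        show e*nn - nn*e = -nn
        rw [ext_cor_kill_left hef hnn, ext_cor_absorb_right he hnn, zero_sub]
      rw [hben] at h
      have h' : (-nn)*x0 - x0*(-nn) = 0 := h
      have h'' : x0*nn - nn*x0 = 0 := by
        rw [show x0*nn - nn*x0 = (-nn)*x0 - x0*(-nn) from by noncomm_ring]
        exact h'
      exact (sub_eq_zero.mp h'').symm
    refine ⟨e*x0*(1-e), (1-e)*x0*e, ext_cor_mk he hff x0, ext_cor_mk hff he x0,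
      ?_, ?_, ?_, ?_, ?_⟩
    · -- nonvanishing
      by_contra hcon
      push_neg at hcon
      obtain ⟨hm00, hn00⟩ := hcon
      have ha0m : ∀ m, corner e (1-e) m → (e*x0*e)*m = m*x0 := by
        intro m hm
        calc (e*x0*e)*m = (e*x0)*(e*m) := by noncomm_ring
          _ = (e*x0)*m := by rw [ext_cor_absorb_left he hm]
          _ = e*(x0*m) := by rw [mul_assoc]
          _ = e*(m*x0) := by rw [← hMx m hm]
          _ = (e*m)*x0 := by rw [mul_assoc]
          _ = m*x0 := by rw [ext_cor_absorb_left he hm]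
      have hb0m : ∀ m, corner e (1-e) m → m*((1-e)*x0*(1-e)) = x0*m := by
        intro m hm
        calc m*((1-e)*x0*(1-e)) = (m*(1-e))*x0*(1-e) := by noncomm_ring
          _ = m*x0*(1-e) := by rw [ext_cor_absorb_right hff hm]
          _ = (x0*m)*(1-e) := by rw [hMx m hm]
          _ = x0*(m*(1-e)) := by rw [mul_assoc]
          _ = x0*m := by rw [ext_cor_absorb_right hff hm]
      have hdec : x0 = e*x0*e + (1-e)*x0*(1-e) := by
        conv_lhs => rw [ext_peirce e x0]
        rw [hm00, hn00]
        abel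
      have hAx : ∀ a, corner e e a → a * x0 = x0 * a := by
        intro a ha
        have ha0 : corner e e (e*x0*e) := ext_cor_mk he he x0
        have hkey : (e*x0*e)*a - a*(e*x0*e) = 0 := by
          refine hf.1 _ ?_ ?_
          · exact ext_cor_sub (ext_cor_mul he he ha0 ha) (ext_cor_mul he he ha ha0)
          · intro m hm
            calc ((e*x0*e)*a - a*(e*x0*e))*m
                = (e*x0*e)*(a*m) - a*((e*x0*e)*m) := by noncomm_ring
              _ = (a*m)*x0 - a*(m*x0) := by
                  rw [ha0m _ (ext_cor_mul he hff ha hm), ha0m _ hm]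
              _ = 0 := by rw [← mul_assoc, sub_self]
        have hkey' := sub_eq_zero.mp hkey
        calc a*x0 = a*(e*x0*e + (1-e)*x0*(1-e)) := by rw [← hdec]
          _ = a*(e*x0*e) + a*((1-e)*x0*(1-e)) := by rw [mul_add]
          _ = a*(e*x0*e) := by
              rw [ext_cor_mul_zero ha (ext_cor_mk hff hff x0) hef, add_zero]
          _ = (e*x0*e)*a := hkey'.symm
          _ = (e*x0*e)*a + ((1-e)*x0*(1-e))*a := by
              rw [ext_cor_mul_zero (ext_cor_mk hff hff x0) ha hfe, add_zero]
          _ = (e*x0*e + (1-e)*x0*(1-e))*a := by rw [add_mul]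
          _ = x0*a := by rw [← hdec]
      have hBx : ∀ b, corner (1-e) (1-e) b → b * x0 = x0 * b := by
        intro b hb
        have hb0 : corner (1-e) (1-e) ((1-e)*x0*(1-e)) := ext_cor_mk hff hff x0
        have hkey : ((1-e)*x0*(1-e))*b - b*((1-e)*x0*(1-e)) = 0 := by
          refine hf.2 _ ?_ ?_
          · exact ext_cor_sub (ext_cor_mul hff hff hb0 hb) (ext_cor_mul hff hff hb hb0)
          · intro m hm
            calc m*(((1-e)*x0*(1-e))*b - b*((1-e)*x0*(1-e)))
                = (m*((1-e)*x0*(1-e)))*b - (m*b)*((1-e)*x0*(1-e)) := by noncomm_ring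
              _ = (x0*m)*b - x0*(m*b) := by
                  rw [hb0m _ hm, hb0m _ (ext_cor_mul he hff hm hb)]
              _ = 0 := by rw [mul_assoc, sub_self]
        have hkey' := sub_eq_zero.mp hkey
        calc b*x0 = b*(e*x0*e + (1-e)*x0*(1-e)) := by rw [← hdec]
          _ = b*(e*x0*e) + b*((1-e)*x0*(1-e)) := by rw [mul_add]
          _ = b*((1-e)*x0*(1-e)) := by
              rw [ext_cor_mul_zero hb (ext_cor_mk he he x0) hfe, zero_add]
          _ = ((1-e)*x0*(1-e))*b := hkey'.symm
          _ = (e*x0*e)*b + ((1-e)*x0*(1-e))*b := by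
              rw [ext_cor_mul_zero (ext_cor_mk he he x0) hb hef, zero_add]
          _ = (e*x0*e + (1-e)*x0*(1-e))*b := by rw [add_mul]
          _ = x0*b := by rw [← hdec]
      have hcen : ∀ g : G, x0 * g = g * x0 := by
        intro g
        have h := ext_peirce e g
        calc x0*g
            = x0*(e*g*e) + x0*(e*g*(1-e)) + x0*((1-e)*g*e) + x0*((1-e)*g*(1-e)) := by
              conv_lhs => rw [h]
              noncomm_ring
          _ = (e*g*e)*x0 + (e*g*(1-e))*x0 + ((1-e)*g*e)*x0 + ((1-e)*g*(1-e))*x0 := by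
              rw [← hAx _ (ext_cor_mk he he g), ← hMx _ (ext_cor_mk he hff g),
                  ← hNx _ (ext_cor_mk hff he g), ← hBx _ (ext_cor_mk hff hff g)]
          _ = g*x0 := by
              conv_rhs => rw [h]
              noncomm_ring
      have hzero : ∀ (k : ℕ) (y : Fin (k+1) → G), iterBr y x0 = 0 := by
        intro k
        induction k with
        | zero =>
          intro y
          show (y 0)*x0 - x0*(y 0) = 0
          rw [hcen (y 0), sub_self]
        | succ k ih =>
          intro y
          show brk (y 0) (iterBr (Fin.tail y) x0) = 0
          rw [ih (Fin.tail y)]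
          show (y 0)*0 - 0*(y 0) = 0
          simp
      obtain ⟨k, rfl⟩ : ∃ k, n = k + 1 := ⟨n - 1, by omega⟩
      exact hx (hzero k x)
    · -- AA
      intro a1 a2 ha1 ha2
      have hc : corner e e (brk a1 a2) :=
        ext_cor_sub (ext_cor_mul he he ha1 ha2) (ext_cor_mul he he ha2 ha1)
      have h' : brk a1 a2 * x0 - x0 * brk a1 a2 = 0 := hx0 a1 a2
      have hcx := sub_eq_zero.mp h'
      constructor
      · calc brk a1 a2 * (e*x0*(1-e))
            = (brk a1 a2 * e) * x0 * (1-e) := by noncomm_ring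
          _ = brk a1 a2 * x0 * (1-e) := by rw [ext_cor_absorb_right he hc]
          _ = x0 * brk a1 a2 * (1-e) := by rw [hcx]
          _ = x0 * (brk a1 a2 * (1-e)) := by rw [mul_assoc]
          _ = 0 := by rw [ext_cor_kill_right hef hc, mul_zero]
      · calc (1-e)*x0*e * brk a1 a2
            = (1-e) * x0 * (e * brk a1 a2) := by noncomm_ring
          _ = (1-e) * (x0 * brk a1 a2) := by rw [ext_cor_absorb_left he hc, mul_assoc]
          _ = (1-e) * (brk a1 a2 * x0) := by rw [← hcx]
          _ = ((1-e) * brk a1 a2) * x0 := by rw [mul_assoc]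
          _ = 0 := by rw [ext_cor_kill_left hfe hc, zero_mul]
    · -- BB
      intro b1 b2 hb1 hb2
      have hc : corner (1-e) (1-e) (brk b1 b2) :=
        ext_cor_sub (ext_cor_mul hff hff hb1 hb2) (ext_cor_mul hff hff hb2 hb1)
      have h' : brk b1 b2 * x0 - x0 * brk b1 b2 = 0 := hx0 b1 b2
      have hcx := sub_eq_zero.mp h'
      constructor
      · calc e*x0*(1-e) * brk b1 b2
            = e * x0 * ((1-e) * brk b1 b2) := by noncomm_ring
          _ = e * (x0 * brk b1 b2) := by rw [ext_cor_absorb_left hff hc, mul_assoc]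
          _ = e * (brk b1 b2 * x0) := by rw [← hcx]
          _ = (e * brk b1 b2) * x0 := by rw [mul_assoc]
          _ = 0 := by rw [ext_cor_kill_left hef hc, zero_mul]
      · calc brk b1 b2 * ((1-e)*x0*e)
            = (brk b1 b2 * (1-e)) * x0 * e := by noncomm_ring
          _ = brk b1 b2 * x0 * e := by rw [ext_cor_absorb_right hff hc]
          _ = x0 * brk b1 b2 * e := by rw [hcx]
          _ = x0 * (brk b1 b2 * e) := by rw [mul_assoc]
          _ = 0 := by rw [ext_cor_kill_right hfe hc, mul_zero]
    · -- NN
      intro nn hnn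
      have hnx := hNx nn hnn
      constructor
      · calc e*x0*(1-e) * nn
            = e * x0 * ((1-e) * nn) := by noncomm_ring
          _ = e * (x0 * nn) := by rw [ext_cor_absorb_left hff hnn, mul_assoc]
          _ = e * (nn * x0) := by rw [← hnx]
          _ = (e * nn) * x0 := by rw [mul_assoc]
          _ = 0 := by rw [ext_cor_kill_left hef hnn, zero_mul]
      · calc nn * (e*x0*(1-e))
            = (nn * e) * x0 * (1-e) := by noncomm_ring
          _ = nn * x0 * (1-e) := by rw [ext_cor_absorb_right he hnn]
          _ = x0 * nn * (1-e) := by rw [hnx]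
          _ = x0 * (nn * (1-e)) := by rw [mul_assoc]
          _ = 0 := by rw [ext_cor_kill_right hef hnn, mul_zero]
    · -- MM
      intro m hm
      have hmx := hMx m hm
      constructor
      · calc (1-e)*x0*e * m
            = (1-e) * x0 * (e * m) := by noncomm_ring
          _ = (1-e) * (x0 * m) := by rw [ext_cor_absorb_left he hm, mul_assoc]
          _ = (1-e) * (m * x0) := by rw [← hmx]
          _ = ((1-e) * m) * x0 := by rw [mul_assoc]
          _ = 0 := by rw [ext_cor_kill_left hfe hm, zero_mul]
      · calc m * ((1-e)*x0*e)
            = (m * (1-e)) * x0 * e := by noncomm_ring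
          _ = m * x0 * e := by rw [ext_cor_absorb_right hff hm]
          _ = x0 * m * e := by rw [hmx]
          _ = x0 * (m * e) := by rw [mul_assoc]
          _ = 0 := by rw [ext_cor_kill_right hfe hm, mul_zero]
  · rintro ⟨m0, n0, hm0, hn0, hne, hAA, hBB, hNN, hMM⟩
    have hem0 : e*m0 = m0 := ext_cor_absorb_left he hm0
    have hm0e : m0*e = 0 := ext_cor_kill_right hfe hm0
    have hm0f : m0*(1-e) = m0 := ext_cor_absorb_right hff hm0
    have hfm0 : (1-e)*m0 = 0 := ext_cor_kill_left hfe hm0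
    have hen0 : e*n0 = 0 := ext_cor_kill_left hef hn0
    have hn0e : n0*e = n0 := ext_cor_absorb_right he hn0
    have hfn0 : (1-e)*n0 = n0 := ext_cor_absorb_left hff hn0
    have hn0f : n0*(1-e) = 0 := ext_cor_kill_right hef hn0
    have hexpE : ∀ u v : G, e*(u*v - v*u)*e
        = brk (e*u*e) (e*v*e) + (e*u*(1-e))*((1-e)*v*e) - (e*v*(1-e))*((1-e)*u*e) := by
      intro u v
      unfold brk
      rw [show e*(u*v - v*u)*e = e*(u*v)*e - e*(v*u)*e from by noncomm_ring,
          ext_exp_ee he u v, ext_exp_ee he v u]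
      noncomm_ring
    have hexpF : ∀ u v : G, (1-e)*(u*v - v*u)*(1-e)
        = brk ((1-e)*u*(1-e)) ((1-e)*v*(1-e)) + ((1-e)*u*e)*(e*v*(1-e))
          - ((1-e)*v*e)*(e*u*(1-e)) := by
      intro u v
      unfold brk
      rw [show (1-e)*(u*v - v*u)*(1-e) = (1-e)*(u*v)*(1-e) - (1-e)*(v*u)*(1-e) from by
            noncomm_ring,
          ext_exp_ff he u v, ext_exp_ff he v u]
      noncomm_ring
    have hgm0 : ∀ u v : G, (u*v - v*u) * m0 = 0 := by
      intro u v
      have hA' : (e*(u*v - v*u)*e) * m0 = 0 := by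
        rw [hexpE u v]
        calc (brk (e*u*e) (e*v*e) + (e*u*(1-e))*((1-e)*v*e) - (e*v*(1-e))*((1-e)*u*e)) * m0
            = brk (e*u*e) (e*v*e) * m0 + (e*u*(1-e))*(((1-e)*v*e)*m0)
              - (e*v*(1-e))*(((1-e)*u*e)*m0) := by noncomm_ring
          _ = 0 := by
              rw [(hAA _ _ (ext_cor_mk he he u) (ext_cor_mk he he v)).1,
                  (hNN _ (ext_cor_mk hff he v)).2, (hNN _ (ext_cor_mk hff he u)).2,
                  mul_zero, mul_zero]
              simp
      calc (u*v - v*u)*m0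
          = (e*(u*v - v*u)*e)*m0 + ((1-e)*(u*v - v*u)*e)*m0 := by
            rw [show (e*(u*v - v*u)*e)*m0 + ((1-e)*(u*v - v*u)*e)*m0
                  = ((u*v - v*u)*e)*m0 from by noncomm_ring, mul_assoc, hem0]
        _ = 0 := by rw [hA', (hNN _ (ext_cor_mk hff he (u*v - v*u))).2, add_zero]
    have hm0g : ∀ u v : G, m0 * (u*v - v*u) = 0 := by
      intro u v
      have hB' : m0 * ((1-e)*(u*v - v*u)*(1-e)) = 0 := by
        rw [hexpF u v]
        calc m0 * (brk ((1-e)*u*(1-e)) ((1-e)*v*(1-e)) + ((1-e)*u*e)*(e*v*(1-e))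
              - ((1-e)*v*e)*(e*u*(1-e)))
            = m0 * brk ((1-e)*u*(1-e)) ((1-e)*v*(1-e)) + (m0*((1-e)*u*e))*(e*v*(1-e))
              - (m0*((1-e)*v*e))*(e*u*(1-e)) := by noncomm_ring
          _ = 0 := by
              rw [(hBB _ _ (ext_cor_mk hff hff u) (ext_cor_mk hff hff v)).1,
                  (hNN _ (ext_cor_mk hff he u)).1, (hNN _ (ext_cor_mk hff he v)).1,
                  zero_mul, zero_mul]
              simp
      calc m0*(u*v - v*u)
          = m0*((1-e)*(u*v - v*u)*e) + m0*((1-e)*(u*v - v*u)*(1-e)) := by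
            rw [show m0*((1-e)*(u*v - v*u)*e) + m0*((1-e)*(u*v - v*u)*(1-e))
                  = (m0*(1-e))*(u*v - v*u) from by noncomm_ring, hm0f]
        _ = 0 := by rw [hB', (hNN _ (ext_cor_mk hff he (u*v - v*u))).1, zero_add]
    have hgn0 : ∀ u v : G, (u*v - v*u) * n0 = 0 := by
      intro u v
      have hB' : ((1-e)*(u*v - v*u)*(1-e)) * n0 = 0 := by
        rw [hexpF u v]
        calc (brk ((1-e)*u*(1-e)) ((1-e)*v*(1-e)) + ((1-e)*u*e)*(e*v*(1-e))
              - ((1-e)*v*e)*(e*u*(1-e))) * n0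
            = brk ((1-e)*u*(1-e)) ((1-e)*v*(1-e)) * n0 + ((1-e)*u*e)*((e*v*(1-e))*n0)
              - ((1-e)*v*e)*((e*u*(1-e))*n0) := by noncomm_ring
          _ = 0 := by
              rw [(hBB _ _ (ext_cor_mk hff hff u) (ext_cor_mk hff hff v)).2,
                  (hMM _ (ext_cor_mk he hff v)).2, (hMM _ (ext_cor_mk he hff u)).2,
                  mul_zero, mul_zero]
              simp
      calc (u*v - v*u)*n0
          = (e*(u*v - v*u)*(1-e))*n0 + ((1-e)*(u*v - v*u)*(1-e))*n0 := by
            rw [show (e*(u*v - v*u)*(1-e))*n0 + ((1-e)*(u*v - v*u)*(1-e))*n0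
                  = ((u*v - v*u)*(1-e))*n0 from by noncomm_ring, mul_assoc, hfn0]
        _ = 0 := by rw [hB', (hMM _ (ext_cor_mk he hff (u*v - v*u))).2, zero_add]
    have hn0g : ∀ u v : G, n0 * (u*v - v*u) = 0 := by
      intro u v
      have hA' : n0 * (e*(u*v - v*u)*e) = 0 := by
        rw [hexpE u v]
        calc n0 * (brk (e*u*e) (e*v*e) + (e*u*(1-e))*((1-e)*v*e)
              - (e*v*(1-e))*((1-e)*u*e))
            = n0 * brk (e*u*e) (e*v*e) + (n0*(e*u*(1-e)))*((1-e)*v*e)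
              - (n0*(e*v*(1-e)))*((1-e)*u*e) := by noncomm_ring
          _ = 0 := by
              rw [(hAA _ _ (ext_cor_mk he he u) (ext_cor_mk he he v)).2,
                  (hMM _ (ext_cor_mk he hff u)).1, (hMM _ (ext_cor_mk he hff v)).1,
                  zero_mul, zero_mul]
              simp
      calc n0*(u*v - v*u)
          = n0*(e*(u*v - v*u)*e) + n0*(e*(u*v - v*u)*(1-e)) := by
            rw [show n0*(e*(u*v - v*u)*e) + n0*(e*(u*v - v*u)*(1-e))
                  = (n0*e)*(u*v - v*u) from by noncomm_ring, hn0e]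
        _ = 0 := by rw [hA', (hMM _ (ext_cor_mk he hff (u*v - v*u))).1, add_zero]
    have hcomm : ∀ u v : G, brk (brk u v) (m0+n0) = 0 := by
      intro u v
      show (u*v - v*u)*(m0+n0) - (m0+n0)*(u*v - v*u) = 0
      rw [mul_add, add_mul, hgm0 u v, hgn0 u v, hm0g u v, hn0g u v]
      simp
    have hbr1 : brk e (m0+n0) = m0 - n0 := by
      show e*(m0+n0) - (m0+n0)*e = m0 - n0
      rw [mul_add, add_mul, hem0, hen0, hm0e, hn0e]
      abel
    have hbr2 : brk e (m0-n0) = m0 + n0 := by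
      show e*(m0-n0) - (m0-n0)*e = m0 + n0
      rw [mul_sub, sub_mul, hem0, hen0, hm0e, hn0e]
      abel
    have hiter : ∀ k : ℕ, iterBr (fun _ : Fin k => e) (m0+n0) = m0+n0 ∨
        iterBr (fun _ : Fin k => e) (m0+n0) = m0-n0 := by
      intro k
      induction k with
      | zero => exact Or.inl rfl
      | succ k ih =>
        have hstep : iterBr (fun _ : Fin (k+1) => e) (m0+n0)
            = brk e (iterBr (fun _ : Fin k => e) (m0+n0)) := rfl
        rcases ih with h | h
        · right; rw [hstep, h, hbr1]
        · left; rw [hstep, h, hbr2]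
    have hnz1 : m0 + n0 ≠ 0 := by
      intro h0
      have h1 : m0 = 0 := by
        have hme : e*(m0+n0)*(1-e) = m0 := by
          rw [show e*(m0+n0)*(1-e) = (e*m0)*(1-e) + (e*n0)*(1-e) from by noncomm_ring,
              hem0, hen0, zero_mul, add_zero, hm0f]
        rw [h0] at hme
        simpa using hme.symm
      have h2 : n0 = 0 := by
        have hne' : (1-e)*(m0+n0)*e = n0 := by
          rw [show (1-e)*(m0+n0)*e = ((1-e)*m0)*e + ((1-e)*n0)*e from by noncomm_ring,
              hfm0, hfn0, zero_mul, zero_add, hn0e]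
        rw [h0] at hne'
        simpa using hne'.symm
      rcases hne with h | h
      · exact h h1
      · exact h h2
    have hnz2 : m0 - n0 ≠ 0 := by
      intro h0
      have h1 : m0 = 0 := by
        have hme : e*(m0-n0)*(1-e) = m0 := by
          rw [show e*(m0-n0)*(1-e) = (e*m0)*(1-e) - (e*n0)*(1-e) from by noncomm_ring,
              hem0, hen0, zero_mul, sub_zero, hm0f]
        rw [h0] at hme
        simpa using hme.symm
      have h2 : n0 = 0 := by
        have hne' : (1-e)*(m0-n0)*e = -n0 := by
          rw [show (1-e)*(m0-n0)*e = ((1-e)*m0)*e - ((1-e)*n0)*e from by noncomm_ring,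
              hfm0, hfn0, zero_mul, zero_sub, hn0e]
        rw [h0] at hne'
        have h' : (0:G) = -n0 := by simpa using hne'
        simpa using h'.symm
      rcases hne with h | h
      · exact h h1
      · exact h h2
    refine ⟨m0 + n0, hcomm, fun _ => e, ?_⟩
    rcases hiter n with h | h
    · rw [h]; exact hnz1
    · rw [h]; exact hnz2
end

section
/- Let G be a generalized matrix algebra (as in the context) satisfying (H1) every element of Z(A) has the form e*w*e for some w ∈ Z(G) and every element of Z(B) has the form f*w*f for some w ∈ Z(G), and (H2) A contains no nonzero central ideal (there is no nonzero c ∈ Z(A) with a*c ∈ Z(A) for all a ∈ A) or B contains no nonzero central ideal (analogously in B). Let φ : G × G × G → G be a 3-Lie derivation with φ(e,e,e) ≠ 0, and set X0 = e*φ(e,e,e)*f - f*φ(e,e,e)*e. Then [[u,v],X0] = 0 for all u,v ∈ G, the map κ(x,y,z) = [x,[y,[z,X0]]] is a 3-Lie derivation of G, and ψ = φ - κ is a 3-Lie derivation of G satisfying ψ(e,e,e) ∈ Z(G). -/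
section GMAHelpers
variable {G : Type*} [Ring G]

private lemma brk_jac (u v w : G) :
    brk (brk u v) w = brk u (brk v w) - brk v (brk u w) := by
  simp only [brk]; noncomm_ring

private lemma brk_leib (a b w : G) :
    brk (brk a b) w = brk (brk a w) b + brk a (brk b w) := by
  simp only [brk]; noncomm_ring

private lemma brk_ad (u y w : G) :
    brk u (brk y w) = brk (brk u y) w + brk y (brk u w) := by
  simp only [brk]; noncomm_ring

private lemma brk_zero_right (x : G) : brk x 0 = 0 := by simp [brk]

private lemma brk_add_left (a b c : G) : brk (a + b) c = brk a c + brk b c := by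
  simp only [brk, add_mul, mul_add]; abel

private lemma brk_add_right (a b c : G) : brk a (b + c) = brk a b + brk a c := by
  simp only [brk, add_mul, mul_add]; abel

private lemma brk_sub_left (a b c : G) : brk (a - b) c = brk a c - brk b c := by
  simp only [brk, sub_mul, mul_sub]; abel

private lemma brk_sub_right (a b c : G) : brk a (b - c) = brk a b - brk a c := by
  simp only [brk, sub_mul, mul_sub]; abel

private lemma brk_smul_left {R : Type*} [CommRing R] [Algebra R G] (r : R) (a c : G) :
    brk (r • a) c = r • brk a c := by
  simp only [brk, smul_mul_assoc, mul_smul_comm, smul_sub]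

private lemma brk_smul_right {R : Type*} [CommRing R] [Algebra R G] (r : R) (a c : G) :
    brk a (r • c) = r • brk a c := by
  simp only [brk, smul_mul_assoc, mul_smul_comm, smul_sub]

private lemma ca {e a : G} (he : e * e = e) (ha : e * a * e = a) :
    e * a = a ∧ a * e = a := by
  constructor
  · conv_lhs => rw [← ha]
    rw [← mul_assoc, ← mul_assoc, he]
    exact ha
  · conv_lhs => rw [← ha]
    rw [mul_assoc, he]
    exact ha

private lemma cm {e m : G} (he : e * e = e) (hm : e * m * (1 - e) = m) :
    e * m = m ∧ m * e = 0 ∧ m * (1 - e) = m ∧ (1 - e) * m = 0 := by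
  have me : m * e = 0 := by
    conv_lhs => rw [← hm]
    rw [mul_assoc, mul_assoc, sub_mul, one_mul, he, sub_self, mul_zero, mul_zero]
  have em : e * m = m := by
    conv_lhs => rw [← hm]
    rw [← mul_assoc, ← mul_assoc, he]
    exact hm
  refine ⟨em, me, ?_, ?_⟩
  · rw [mul_sub, mul_one, me, sub_zero]
  · rw [sub_mul, one_mul, em, sub_self]

private lemma cnl {e n : G} (he : e * e = e) (hn : (1 - e) * n * e = n) :
    e * n = 0 ∧ n * e = n ∧ n * (1 - e) = 0 ∧ (1 - e) * n = n := by
  have ne' : n * e = n := by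
    conv_lhs => rw [← hn]
    rw [mul_assoc, mul_assoc, he, ← mul_assoc]
    exact hn
  have en : e * n = 0 := by
    conv_lhs => rw [← hn]
    rw [← mul_assoc, ← mul_assoc, mul_sub, mul_one, he, sub_self, zero_mul, zero_mul]
  refine ⟨en, ne', ?_, ?_⟩
  · rw [mul_sub, mul_one, ne', sub_self]
  · rw [sub_mul, one_mul, en, sub_zero]

private lemma cbl {e b : G} (he : e * e = e) (hb : (1 - e) * b * (1 - e) = b) :
    e * b = 0 ∧ b * e = 0 ∧ (1 - e) * b = b ∧ b * (1 - e) = b := by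
  have hfe : (1 - e) * e = 0 := by rw [sub_mul, one_mul, he, sub_self]
  have hef : e * (1 - e) = 0 := by rw [mul_sub, mul_one, he, sub_self]
  have be : b * e = 0 := by
    conv_lhs => rw [← hb]
    rw [mul_assoc, mul_assoc, hfe, mul_zero, mul_zero]
  have eb : e * b = 0 := by
    conv_lhs => rw [← hb]
    rw [← mul_assoc, ← mul_assoc, hef, zero_mul, zero_mul]
  refine ⟨eb, be, ?_, ?_⟩
  · rw [sub_mul, one_mul, eb, sub_zero]
  · rw [mul_sub, mul_one, be, sub_zero]

private lemma cornAM {e a m : G} (he : e * e = e) (ha : e * a * e = a)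
    (hm : e * m * (1 - e) = m) : e * (a * m) * (1 - e) = a * m := by
  rw [← mul_assoc e a m, (ca he ha).1, mul_assoc, (cm he hm).2.2.1]

private lemma cornBN {e b n : G} (he : e * e = e) (hb : (1 - e) * b * (1 - e) = b)
    (hn : (1 - e) * n * e = n) : (1 - e) * (b * n) * e = b * n := by
  rw [← mul_assoc (1 - e) b n, (cbl he hb).2.2.1, mul_assoc, (cnl he hn).2.1]

private lemma ruleM {e : G} (he : e * e = e)
    (D : G → G) (hL : ∀ a b : G, D (brk a b) = brk (D a) b + brk a (D b))
    {q : G} (hq : D e = q) {m : G} (hm : e * m * (1 - e) = m) :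
    e * D m * e = -(m * ((1 - e) * q * e)) ∧
      (1 - e) * D m * (1 - e) = (1 - e) * q * e * m ∧
      e * q * e * m = m * ((1 - e) * q * (1 - e)) := by
  have hee : ∀ x : G, e * (e * x) = e * x := fun x => by rw [← mul_assoc, he]
  have me : m * e = 0 := by
    conv_lhs => rw [← hm]
    rw [mul_assoc, mul_assoc, sub_mul, one_mul, he, sub_self, mul_zero, mul_zero]
  have em : e * m = m := by
    conv_lhs => rw [← hm]
    rw [← mul_assoc, ← mul_assoc, he]
    exact hm
  have hemx : ∀ x : G, e * (m * x) = m * x := fun x => by rw [← mul_assoc, em]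
  have hmex : ∀ x : G, m * (e * x) = 0 := fun x => by rw [← mul_assoc, me, zero_mul]
  have hbem : brk e m = m := by rw [brk, em, me, sub_zero]
  have h := hL e m
  rw [hbem, hq] at h
  refine ⟨?_, ?_, ?_⟩
  · rw [h]
    simp only [brk, mul_add, add_mul, mul_sub, sub_mul, neg_mul, mul_neg, neg_neg,
      mul_assoc, mul_one, one_mul, hee, he, em, me, hemx, hmex, mul_zero, zero_mul,
      sub_zero, zero_sub, sub_self]
    try abel
  · rw [h]
    simp only [brk, mul_add, add_mul, mul_sub, sub_mul, neg_mul, mul_neg, neg_neg,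
      mul_assoc, mul_one, one_mul, hee, he, em, me, hemx, hmex, mul_zero, zero_mul,
      sub_zero, zero_sub, sub_self]
    try abel
  · have h0 : brk q m = D m - brk e (D m) := eq_sub_of_add_eq h.symm
    have h2 : e * (D m - brk e (D m)) * (1 - e) = 0 := by
      simp only [brk, mul_add, add_mul, mul_sub, sub_mul, neg_mul, mul_neg, neg_neg,
        mul_one, one_mul, mul_assoc, hee, he]
      try abel
    have h3 : e * brk q m * (1 - e) = e * q * e * m - m * ((1 - e) * q * (1 - e)) := by
      simp only [brk, mul_add, add_mul, mul_sub, sub_mul, neg_mul, mul_neg, neg_neg,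
        mul_one, one_mul, mul_assoc, hee, he, em, me, hemx, hmex, mul_zero, zero_mul,
        sub_zero, zero_sub, sub_self]
      try abel
    rw [← sub_eq_zero, ← h3, h0]
    exact h2

private lemma ruleN {e : G} (he : e * e = e)
    (D : G → G) (hL : ∀ a b : G, D (brk a b) = brk (D a) b + brk a (D b))
    (hDneg : ∀ x : G, D (-x) = -(D x))
    {q : G} (hq : D e = q) {n : G} (hn : (1 - e) * n * e = n) :
    e * D n * e = -(e * q * (1 - e) * n) ∧
      (1 - e) * D n * (1 - e) = n * (e * q * (1 - e)) ∧
      (1 - e) * q * (1 - e) * n = n * (e * q * e) := by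
  have hee : ∀ x : G, e * (e * x) = e * x := fun x => by rw [← mul_assoc, he]
  have ne' : n * e = n := by
    conv_lhs => rw [← hn]
    rw [mul_assoc, mul_assoc, he, ← mul_assoc]
    exact hn
  have en : e * n = 0 := by
    conv_lhs => rw [← hn]
    rw [← mul_assoc, ← mul_assoc, mul_sub, mul_one, he, sub_self, zero_mul, zero_mul]
  have henx : ∀ x : G, e * (n * x) = 0 := fun x => by rw [← mul_assoc, en, zero_mul]
  have hnex : ∀ x : G, n * (e * x) = n * x := fun x => by rw [← mul_assoc, ne']
  have hben : brk e n = -n := by rw [brk, en, ne', zero_sub]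
  have h := hL e n
  rw [hben, hq, hDneg n] at h
  have hDn : D n = -(brk q n + brk e (D n)) := by rw [← h, neg_neg]
  refine ⟨?_, ?_, ?_⟩
  · rw [hDn]
    simp only [brk, mul_add, add_mul, mul_sub, sub_mul, mul_neg, neg_mul, neg_neg,
      mul_assoc, mul_one, one_mul, hee, he, en, ne', henx, hnex, mul_zero, zero_mul,
      sub_zero, zero_sub, sub_self]
    try abel
  · rw [hDn]
    simp only [brk, mul_add, add_mul, mul_sub, sub_mul, mul_neg, neg_mul, neg_neg,
      mul_assoc, mul_one, one_mul, hee, he, en, ne', henx, hnex, mul_zero, zero_mul,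
      sub_zero, zero_sub, sub_self]
    try abel
  · have h0 : brk q n = -(D n) - brk e (D n) := eq_sub_of_add_eq h.symm
    have h2 : (1 - e) * (-(D n) - brk e (D n)) * e = 0 := by
      simp only [brk, mul_add, add_mul, mul_sub, sub_mul, mul_neg, neg_mul, neg_neg,
        mul_one, one_mul, mul_assoc, hee, he]
      try abel
    have h3 : (1 - e) * brk q n * e = (1 - e) * q * (1 - e) * n - n * (e * q * e) := by
      simp only [brk, mul_add, add_mul, mul_sub, sub_mul, mul_neg, neg_mul, neg_neg,
        mul_one, one_mul, mul_assoc, hee, he, en, ne', henx, hnex, mul_zero, zero_mul,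
        sub_zero, zero_sub, sub_self]
      try abel
    rw [← sub_eq_zero, ← h3, h0]
    exact h2

private lemma ruleA {e : G} (he : e * e = e)
    (D : G → G) (hL : ∀ a b : G, D (brk a b) = brk (D a) b + brk a (D b))
    {q : G} (hq : D e = q) {a : G} (ha : e * a * e = a) :
    e * D a * (1 - e) = a * (e * q * (1 - e)) ∧
      (1 - e) * D a * e = (1 - e) * q * e * a := by
  have hee : ∀ x : G, e * (e * x) = e * x := fun x => by rw [← mul_assoc, he]
  have hea : e * a = a := (ca he ha).1
  have hae : a * e = a := (ca he ha).2
  have heax : ∀ x : G, e * (a * x) = a * x := fun x => by rw [← mul_assoc, hea]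
  have haex : ∀ x : G, a * (e * x) = a * x := fun x => by rw [← mul_assoc, hae]
  have hbea : brk e a = 0 := by rw [brk, hea, hae, sub_self]
  have hD0 : D 0 = 0 := by
    have h00 := hL e e
    rw [show brk e e = 0 from by rw [brk, sub_self]] at h00
    rw [h00]
    simp only [brk]
    abel
  have h := hL e a
  rw [hbea, hD0, hq] at h
  have h' : brk q a + brk e (D a) = 0 := h.symm
  have h0 : brk q a = -(brk e (D a)) := by
    rw [add_eq_zero_iff_eq_neg] at h'
    exact h'
  have h0' : brk e (D a) = -(brk q a) := by rw [h0, neg_neg]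
  constructor
  · have h4 : e * brk q a * (1 - e) = -(a * (e * q * (1 - e))) := by
      simp only [brk, mul_add, add_mul, mul_sub, sub_mul, neg_mul, mul_neg, neg_neg,
        mul_one, one_mul, mul_assoc, hee, he, hea, hae, heax, haex, mul_zero, zero_mul,
        sub_zero, zero_sub, sub_self]
      try abel
    have h5 : e * brk e (D a) * (1 - e) = e * D a * (1 - e) := by
      simp only [brk, mul_add, add_mul, mul_sub, sub_mul, neg_mul, mul_neg, neg_neg,
        mul_one, one_mul, mul_assoc, hee, he]
      try abel
    calc e * D a * (1 - e) = e * brk e (D a) * (1 - e) := h5.symm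
      _ = e * (-(brk q a)) * (1 - e) := by rw [h0']
      _ = -(e * brk q a * (1 - e)) := by rw [mul_neg, neg_mul]
      _ = a * (e * q * (1 - e)) := by rw [h4, neg_neg]
  · have h4 : (1 - e) * brk q a * e = (1 - e) * q * e * a := by
      simp only [brk, mul_add, add_mul, mul_sub, sub_mul, neg_mul, mul_neg, neg_neg,
        mul_one, one_mul, mul_assoc, hee, he, hea, hae, heax, haex, mul_zero, zero_mul,
        sub_zero, zero_sub, sub_self]
      try abel
    have h5 : (1 - e) * brk e (D a) * e = -((1 - e) * D a * e) := by
      simp only [brk, mul_add, add_mul, mul_sub, sub_mul, neg_mul, mul_neg, neg_neg,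
        mul_one, one_mul, mul_assoc, hee, he]
      try abel
    have h6 : (1 - e) * brk e (D a) * e = -((1 - e) * brk q a * e) := by
      rw [h0', mul_neg, neg_mul]
    rw [h6] at h5
    have := neg_injective h5
    rw [← this, h4]

private lemma ruleB {e : G} (he : e * e = e)
    (D : G → G) (hL : ∀ a b : G, D (brk a b) = brk (D a) b + brk a (D b))
    {q : G} (hq : D e = q) {b : G} (hb : (1 - e) * b * (1 - e) = b) :
    e * D b * (1 - e) = -(e * q * (1 - e) * b) ∧
      (1 - e) * D b * e = -(b * ((1 - e) * q * e)) := by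
  have hee : ∀ x : G, e * (e * x) = e * x := fun x => by rw [← mul_assoc, he]
  have hbe : b * e = 0 := (cbl he hb).2.1
  have heb : e * b = 0 := (cbl he hb).1
  have hebx : ∀ x : G, e * (b * x) = 0 := fun x => by rw [← mul_assoc, heb, zero_mul]
  have hbex : ∀ x : G, b * (e * x) = 0 := fun x => by rw [← mul_assoc, hbe, zero_mul]
  have hbeb : brk e b = 0 := by rw [brk, heb, hbe, sub_self]
  have hD0 : D 0 = 0 := by
    have h00 := hL e e
    rw [show brk e e = 0 from by rw [brk, sub_self]] at h00
    rw [h00]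
    simp only [brk]
    abel
  have h := hL e b
  rw [hbeb, hD0, hq] at h
  have h' : brk q b + brk e (D b) = 0 := h.symm
  have h0 : brk q b = -(brk e (D b)) := by
    rw [add_eq_zero_iff_eq_neg] at h'
    exact h'
  have h0' : brk e (D b) = -(brk q b) := by rw [h0, neg_neg]
  constructor
  · have h4 : e * brk q b * (1 - e) = e * q * (1 - e) * b := by
      simp only [brk, mul_add, add_mul, mul_sub, sub_mul, neg_mul, mul_neg, neg_neg,
        mul_one, one_mul, mul_assoc, hee, he, heb, hbe, hebx, hbex, mul_zero, zero_mul,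
        sub_zero, zero_sub, sub_self]
      try abel
    have h5 : e * brk e (D b) * (1 - e) = e * D b * (1 - e) := by
      simp only [brk, mul_add, add_mul, mul_sub, sub_mul, neg_mul, mul_neg, neg_neg,
        mul_one, one_mul, mul_assoc, hee, he]
      try abel
    calc e * D b * (1 - e) = e * brk e (D b) * (1 - e) := h5.symm
      _ = -(e * brk q b * (1 - e)) := by rw [h0', mul_neg, neg_mul]
      _ = -(e * q * (1 - e) * b) := by rw [h4]
  · have h4 : (1 - e) * brk q b * e = -(b * ((1 - e) * q * e)) := by
      simp only [brk, mul_add, add_mul, mul_sub, sub_mul, neg_mul, mul_neg, neg_neg,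
        mul_one, one_mul, mul_assoc, hee, he, heb, hbe, hebx, hbex, mul_zero, zero_mul,
        sub_zero, zero_sub, sub_self]
      try abel
    have h5 : (1 - e) * brk e (D b) * e = -((1 - e) * D b * e) := by
      simp only [brk, mul_add, add_mul, mul_sub, sub_mul, neg_mul, mul_neg, neg_neg,
        mul_one, one_mul, mul_assoc, hee, he]
      try abel
    have h6 : (1 - e) * brk e (D b) * e = -((1 - e) * brk q b * e) := by
      rw [h0', mul_neg, neg_mul]
    rw [h6] at h5
    have := neg_injective h5
    rw [← this, h4]

private lemma ccNeg {p x : G} (h : cornerCentral p x) : cornerCentral p (-x) := by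
  obtain ⟨h1, h2⟩ := h
  refine ⟨?_, fun a ha => ?_⟩
  · show p * (-x) * p = -x
    rw [mul_neg, neg_mul]
    exact congrArg Neg.neg h1
  · rw [neg_mul, mul_neg, h2 a ha]

private lemma ccA {e : G} (he : e * e = e)
    (hf1 : ∀ a, corner e e a → (∀ m, corner e (1 - e) m → a * m = 0) → a = 0)
    {w : G} (hz : ∀ m, e * m * (1 - e) = m → e * w * e * m = m * ((1 - e) * w * (1 - e))) :
    cornerCentral e (e * w * e) := by
  have hee : ∀ x : G, e * (e * x) = e * x := fun x => by rw [← mul_assoc, he]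
  refine ⟨?_, fun a ha => ?_⟩
  · show e * (e * w * e) * e = e * w * e
    simp only [mul_assoc, hee, he]
  · have ha' : e * a * e = a := ha
    have hea : e * a = a := (ca he ha').1
    have hae : a * e = a := (ca he ha').2
    have heax : ∀ x : G, e * (a * x) = a * x := fun x => by rw [← mul_assoc, hea]
    have hcorn : corner e e (e * w * e * a - a * (e * w * e)) := by
      show e * (e * w * e * a - a * (e * w * e)) * e = _
      simp only [mul_sub, sub_mul, mul_assoc, hee, he, heax, hae]
    have hkey : ∀ m, corner e (1 - e) m → (e * w * e * a - a * (e * w * e)) * m = 0 := by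
      intro m hm
      have hm' : e * m * (1 - e) = m := hm
      have hma : e * (a * m) * (1 - e) = a * m := cornAM he ha' hm'
      have h1 := hz (a * m) hma
      have h2 := hz m hm'
      calc (e * w * e * a - a * (e * w * e)) * m
          = e * w * e * (a * m) - a * (e * w * e * m) := by
            rw [sub_mul, mul_assoc (e * w * e) a m, mul_assoc a (e * w * e) m]
        _ = (a * m) * ((1 - e) * w * (1 - e)) - a * (m * ((1 - e) * w * (1 - e))) := by
            rw [h1, h2]
        _ = 0 := by rw [← mul_assoc a m _]; exact sub_self _
    exact sub_eq_zero.mp (hf1 _ hcorn hkey)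

private lemma ccB {e : G} (he : e * e = e)
    (hf2 : ∀ b, corner (1 - e) (1 - e) b → (∀ m, corner e (1 - e) m → m * b = 0) → b = 0)
    {w : G} (hz : ∀ m, e * m * (1 - e) = m → e * w * e * m = m * ((1 - e) * w * (1 - e))) :
    cornerCentral (1 - e) ((1 - e) * w * (1 - e)) := by
  have hff : (1 - e) * (1 - e) = 1 - e := by
    rw [sub_mul, one_mul, mul_sub, mul_one, he, sub_self, sub_zero]
  have hffx : ∀ x : G, (1 - e) * ((1 - e) * x) = (1 - e) * x := fun x => by
    rw [← mul_assoc, hff]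
  refine ⟨?_, fun b hb => ?_⟩
  · show (1 - e) * ((1 - e) * w * (1 - e)) * (1 - e) = (1 - e) * w * (1 - e)
    simp only [mul_assoc, hffx, hff]
  · have hb' : (1 - e) * b * (1 - e) = b := hb
    have hfb : (1 - e) * b = b := (cbl he hb').2.2.1
    have hbf : b * (1 - e) = b := (cbl he hb').2.2.2
    have hbfx : ∀ x : G, b * ((1 - e) * x) = b * x := fun x => by rw [← mul_assoc, hbf]
    have hFf : (1 - e) * ((1 - e) * w * (1 - e)) = (1 - e) * w * (1 - e) := by
      rw [← mul_assoc, ← mul_assoc, hff]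
    have hfF : (1 - e) * w * (1 - e) * (1 - e) = (1 - e) * w * (1 - e) := by
      rw [mul_assoc, hff]
    have hcorn : corner (1 - e) (1 - e)
        ((1 - e) * w * (1 - e) * b - b * ((1 - e) * w * (1 - e))) := by
      show (1 - e) * ((1 - e) * w * (1 - e) * b - b * ((1 - e) * w * (1 - e))) * (1 - e) = _
      rw [mul_sub (1 - e) ((1 - e) * w * (1 - e) * b) (b * ((1 - e) * w * (1 - e)))]
      rw [sub_mul ((1 - e) * ((1 - e) * w * (1 - e) * b))
        ((1 - e) * (b * ((1 - e) * w * (1 - e)))) (1 - e)]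
      rw [← mul_assoc (1 - e) ((1 - e) * w * (1 - e)) b, hFf]
      rw [mul_assoc ((1 - e) * w * (1 - e)) b (1 - e), hbf]
      rw [← mul_assoc (1 - e) b ((1 - e) * w * (1 - e)), hfb]
      rw [mul_assoc b ((1 - e) * w * (1 - e)) (1 - e), hfF]
    have hkey : ∀ m, corner e (1 - e) m →
        m * ((1 - e) * w * (1 - e) * b - b * ((1 - e) * w * (1 - e))) = 0 := by
      intro m hm
      have hm' : e * m * (1 - e) = m := hm
      have hem : e * m = m := (cm he hm').1
      have hmb : e * (m * b) * (1 - e) = m * b := by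
        rw [← mul_assoc e m b, hem, mul_assoc, hbf]
      have h1 := hz (m * b) hmb
      have h2 := hz m hm'
      calc m * ((1 - e) * w * (1 - e) * b - b * ((1 - e) * w * (1 - e)))
          = m * ((1 - e) * w * (1 - e)) * b - (m * b) * ((1 - e) * w * (1 - e)) := by
            rw [mul_sub, ← mul_assoc m _ b, ← mul_assoc m b _]
        _ = e * w * e * m * b - (m * b) * ((1 - e) * w * (1 - e)) := by rw [← h2]
        _ = (m * b) * ((1 - e) * w * (1 - e)) - (m * b) * ((1 - e) * w * (1 - e)) := by
            rw [mul_assoc (e * w * e) m b, h1]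
        _ = 0 := sub_self _
    exact sub_eq_zero.mp (hf2 _ hcorn hkey)

end GMAHelpers

set_option maxHeartbeats 2000000 in
theorem threeLieDer_split_extremal {R : Type*} [CommRing R]
    (htf : ∀ r : R, r + r = 0 → r = 0)
    {G : Type*} [Ring G] [Algebra R G] (e : G) (he : e * e = e)
    (he0 : e ≠ 0) (he1 : e ≠ 1) (hf : Faithful e)
    (h1 : H1P e) (h2 : H2P e)
    (φ : G → G → G → G) (hφ : IsLieDer3 R φ) (hne : φ e e e ≠ 0) :
    (∀ u v : G,
      brk (brk u v) (e * φ e e e * (1 - e) - (1 - e) * φ e e e * e) = 0) ∧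
    IsLieDer3 R (fun x y z =>
      brk x (brk y (brk z (e * φ e e e * (1 - e) - (1 - e) * φ e e e * e)))) ∧
    IsLieDer3 R (fun x y z => φ x y z -
      brk x (brk y (brk z (e * φ e e e * (1 - e) - (1 - e) * φ e e e * e)))) ∧
    central (φ e e e -
      brk e (brk e (brk e (e * φ e e e * (1 - e) - (1 - e) * φ e e e * e)))) := by
  obtain ⟨hlin1, hlin2, hlin3, hleib1, hleib2, hleib3⟩ := hφ
  set p := φ e e e with hp
  set pM := e * p * (1 - e) with hpM
  set pN := (1 - e) * p * e with hpN
  -- basic idempotent facts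
  have hef : e * (1 - e) = 0 := by rw [mul_sub, mul_one, he, sub_self]
  have hfe : (1 - e) * e = 0 := by rw [sub_mul, one_mul, he, sub_self]
  have hff : (1 - e) * (1 - e) = 1 - e := by
    rw [sub_mul, one_mul, mul_sub, mul_one, he, sub_self, sub_zero]
  have hee : ∀ x : G, e * (e * x) = e * x := fun x => by rw [← mul_assoc, he]
  -- corner facts for pM, pN
  have hMpM' : e * pM * (1 - e) = pM := by
    rw [hpM, ← mul_assoc, ← mul_assoc, he, mul_assoc, hff]
  have hNpN' : (1 - e) * pN * e = pN := by
    rw [hpN, ← mul_assoc, ← mul_assoc, hff, mul_assoc, he]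
  obtain ⟨hepM, hpMe, hpMf, hfpM⟩ := cm he hMpM'
  obtain ⟨hepN, hpNe, hpNf, hfpN⟩ := cnl he hNpN'
  -- negation helpers
  have hneg1 : ∀ y z x : G, φ (-x) y z = -(φ x y z) := by
    intro y z x
    have h := (hlin1 y z).map_smul (-1 : R) x
    simpa only [neg_smul, one_smul] using h
  have hneg3 : ∀ x y c : G, φ x y (-c) = -(φ x y c) := by
    intro x y c
    have h := (hlin3 x y).map_smul (-1 : R) c
    simpa only [neg_smul, one_smul] using h
  -- corner values of L3 = φ e e ·
  have vA3 : ∀ c, e * c * e = c →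
      e * φ e e c * (1 - e) = c * pM ∧ (1 - e) * φ e e c * e = pN * c := by
    intro c hc
    have h := ruleA he (fun z => φ e e z) (hleib3 e e) hp.symm hc
    constructor
    · have h1 := h.1
      rw [← hpM] at h1
      exact h1
    · have h2 := h.2
      rw [← hpN] at h2
      exact h2
  have vB3 : ∀ c, (1 - e) * c * (1 - e) = c →
      e * φ e e c * (1 - e) = -(pM * c) ∧ (1 - e) * φ e e c * e = -(c * pN) := by
    intro c hc
    have h := ruleB he (fun z => φ e e z) (hleib3 e e) hp.symm hc
    constructor
    · have h1 := h.1
      rw [← hpM] at h1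
      exact h1
    · have h2 := h.2
      rw [← hpN] at h2
      exact h2
  have vN3 : ∀ n, (1 - e) * n * e = n →
      e * φ e e n * e = -(pM * n) ∧ (1 - e) * φ e e n * (1 - e) = n * pM := by
    intro n hn
    have h := ruleN he (fun z => φ e e z) (hleib3 e e) (hneg3 e e) hp.symm hn
    constructor
    · have h1 := h.1
      rw [← hpM] at h1
      exact h1
    · have h2 := h.2.1
      rw [← hpM] at h2
      exact h2
  -- corner values of d1 = φ · e e
  have vA1 : ∀ c, e * c * e = c →
      e * φ c e e * (1 - e) = c * pM ∧ (1 - e) * φ c e e * e = pN * c := by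
    intro c hc
    have h := ruleA he (fun x => φ x e e) (hleib1 e e) hp.symm hc
    constructor
    · have h1 := h.1
      rw [← hpM] at h1
      exact h1
    · have h2 := h.2
      rw [← hpN] at h2
      exact h2
  have vB1 : ∀ c, (1 - e) * c * (1 - e) = c →
      e * φ c e e * (1 - e) = -(pM * c) ∧ (1 - e) * φ c e e * e = -(c * pN) := by
    intro c hc
    have h := ruleB he (fun x => φ x e e) (hleib1 e e) hp.symm hc
    constructor
    · have h1 := h.1
      rw [← hpM] at h1
      exact h1
    · have h2 := h.2
      rw [← hpN] at h2
      exact h2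
  have vM1 : ∀ m, e * m * (1 - e) = m →
      e * φ m e e * e = -(m * pN) ∧ (1 - e) * φ m e e * (1 - e) = pN * m := by
    intro m hm
    have h := ruleM he (fun x => φ x e e) (hleib1 e e) hp.symm hm
    constructor
    · have h1 := h.1
      rw [← hpN] at h1
      exact h1
    · have h2 := h.2.1
      rw [← hpN] at h2
      exact h2
  have vN1 : ∀ n, (1 - e) * n * e = n →
      e * φ n e e * e = -(pM * n) ∧ (1 - e) * φ n e e * (1 - e) = n * pM := by
    intro n hn
    have h := ruleN he (fun x => φ x e e) (hleib1 e e) (hneg1 e e) hp.symm hn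
    constructor
    · have h1 := h.1
      rw [← hpM] at h1
      exact h1
    · have h2 := h.2.1
      rw [← hpM] at h2
      exact h2
  -- middle-slot constraint (Zmem)
  have zm3 : ∀ u v m, e * m * (1 - e) = m →
      e * φ u e v * e * m = m * ((1 - e) * φ u e v * (1 - e)) :=
    fun u v m hm => (ruleM he (fun y => φ u y v) (hleib2 u v)
      (rfl : φ u e v = φ u e v) hm).2.2
  have ccw : ∀ u v : G, cornerCentral e (e * φ u e v * e) :=
    fun u v => ccA he hf.1 (zm3 u v)
  have ccwB : ∀ u v : G, cornerCentral (1 - e) ((1 - e) * φ u e v * (1 - e)) :=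
    fun u v => ccB he hf.2 (zm3 u v)
  -- star3
  have star3 : ∀ n m, (1 - e) * n * e = n → e * m * (1 - e) = m →
      m * (n * pM) = -((pM * n) * m) := by
    intro n m hn hm
    have h := zm3 e n m hm
    rw [(vN3 n hn).1, (vN3 n hn).2] at h
    rw [neg_mul] at h
    exact h.symm
  -- (I), (II)
  have hIM : ∀ a a', e * a * e = a → e * a' * e = a' → a * (a' * pM) = a' * (a * pM) := by
    intro a a' ha ha'
    have hA1 := (ruleA he (fun x => φ x e a') (hleib1 e a')
      (rfl : φ e e a' = φ e e a') ha).1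
    rw [(vA3 a' ha').1] at hA1
    have hA2 := (ruleA he (fun z => φ a e z) (hleib3 a e)
      (rfl : φ a e e = φ a e e) ha').1
    rw [(vA1 a ha).1] at hA2
    exact hA1.symm.trans hA2
  have hIN : ∀ a a', e * a * e = a → e * a' * e = a' → pN * a' * a = pN * a * a' := by
    intro a a' ha ha'
    have hA1 := (ruleA he (fun x => φ x e a') (hleib1 e a')
      (rfl : φ e e a' = φ e e a') ha).2
    rw [(vA3 a' ha').2] at hA1
    have hA2 := (ruleA he (fun z => φ a e z) (hleib3 a e)
      (rfl : φ a e e = φ a e e) ha').2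
    rw [(vA1 a ha).2] at hA2
    exact hA1.symm.trans hA2
  have hIIM : ∀ b b', (1 - e) * b * (1 - e) = b → (1 - e) * b' * (1 - e) = b' →
      pM * b' * b = pM * b * b' := by
    intro b b' hb hb'
    have hB1 := (ruleB he (fun x => φ x e b') (hleib1 e b')
      (rfl : φ e e b' = φ e e b') hb).1
    rw [(vB3 b' hb').1, neg_mul, neg_neg] at hB1
    have hB2 := (ruleB he (fun z => φ b e z) (hleib3 b e)
      (rfl : φ b e e = φ b e e) hb').1
    rw [(vB1 b hb).1, neg_mul, neg_neg] at hB2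
    exact hB1.symm.trans hB2
  have hIIN : ∀ b b', (1 - e) * b * (1 - e) = b → (1 - e) * b' * (1 - e) = b' →
      b * (b' * pN) = b' * (b * pN) := by
    intro b b' hb hb'
    have hB1 := (ruleB he (fun x => φ x e b') (hleib1 e b')
      (rfl : φ e e b' = φ e e b') hb).2
    rw [(vB3 b' hb').2, mul_neg, neg_neg] at hB1
    have hB2 := (ruleB he (fun z => φ b e z) (hleib3 b e)
      (rfl : φ b e e = φ b e e) hb').2
    rw [(vB1 b hb).2, mul_neg, neg_neg] at hB2
    exact hB1.symm.trans hB2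
  -- special values for the H2 case analysis
  have hval2 : ∀ m b, e * m * (1 - e) = m → (1 - e) * b * (1 - e) = b →
      (1 - e) * φ m e b * (1 - e) = -((b * pN) * m) := by
    intro m b hm hb
    have h := (ruleM he (fun x => φ x e b) (hleib1 e b)
      (rfl : φ e e b = φ e e b) hm).2.1
    rw [(vB3 b hb).2, neg_mul] at h
    exact h
  have hval3 : ∀ n a, (1 - e) * n * e = n → e * a * e = a →
      e * φ n e a * e = -((a * pM) * n) := by
    intro n a hn ha
    have h := (ruleN he (fun x => φ x e a) (hleib1 e a) (hneg1 e a)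
      (rfl : φ e e a = φ e e a) hn).1
    rw [(vA3 a ha).1] at h
    exact h
  -- (V) : all four annihilation facts
  have hV : (∀ m, e * m * (1 - e) = m → m * pN = 0) ∧
      (∀ m, e * m * (1 - e) = m → pN * m = 0) ∧
      (∀ n, (1 - e) * n * e = n → n * pM = 0) ∧
      (∀ n, (1 - e) * n * e = n → pM * n = 0) := by
    rcases h2 with hA | hB
    · have hMpN : ∀ m, e * m * (1 - e) = m → m * pN = 0 := by
        intro m hm
        by_contra h0
        apply hA
        refine ⟨m * pN, h0, ?_, ?_⟩
        · have hcc := ccNeg (ccw m e)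
          rw [(vM1 m hm).1, neg_neg] at hcc
          exact hcc
        · intro a ha
          have hc : e * (a * m) * (1 - e) = a * m := cornAM he ha hm
          have hcc := ccNeg (ccw (a * m) e)
          rw [(vM1 (a * m) hc).1, neg_neg, mul_assoc] at hcc
          exact hcc
      have hpMN : ∀ n, (1 - e) * n * e = n → pM * n = 0 := by
        intro n hn
        by_contra h0
        apply hA
        refine ⟨pM * n, h0, ?_, ?_⟩
        · have hcc := ccNeg (ccw n e)
          rw [(vN1 n hn).1, neg_neg] at hcc
          exact hcc
        · intro a ha
          have hcc := ccNeg (ccw n a)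
          rw [hval3 n a hn ha, neg_neg, mul_assoc] at hcc
          exact hcc
      have hpNM : ∀ m, e * m * (1 - e) = m → pN * m = 0 := by
        intro m hm
        apply hf.2
        · show (1 - e) * (pN * m) * (1 - e) = pN * m
          rw [← mul_assoc (1 - e) pN m, hfpN, mul_assoc, (cm he hm).2.2.1]
        · intro m'' hm''
          have hm2 : e * m'' * (1 - e) = m'' := hm''
          rw [← mul_assoc, hMpN m'' hm2, zero_mul]
      have hNpM : ∀ n, (1 - e) * n * e = n → n * pM = 0 := by
        intro n hn
        apply hf.2
        · show (1 - e) * (n * pM) * (1 - e) = n * pM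
          rw [← mul_assoc (1 - e) n pM, (cnl he hn).2.2.2, mul_assoc, hpMf]
        · intro m'' hm''
          have hm2 : e * m'' * (1 - e) = m'' := hm''
          rw [star3 n m'' hn hm2, hpMN n hn, zero_mul, neg_zero]
      exact ⟨hMpN, hpNM, hNpM, hpMN⟩
    · have hpNM : ∀ m, e * m * (1 - e) = m → pN * m = 0 := by
        intro m hm
        by_contra h0
        apply hB
        refine ⟨pN * m, h0, ?_, ?_⟩
        · have hcc := ccwB m e
          rw [(vM1 m hm).2] at hcc
          exact hcc
        · intro b hb
          have hb' : (1 - e) * b * (1 - e) = b := hb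
          have hcc := ccNeg (ccwB m b)
          rw [hval2 m b hm hb', neg_neg, mul_assoc] at hcc
          exact hcc
      have hNpM : ∀ n, (1 - e) * n * e = n → n * pM = 0 := by
        intro n hn
        by_contra h0
        apply hB
        refine ⟨n * pM, h0, ?_, ?_⟩
        · have hcc := ccwB n e
          rw [(vN1 n hn).2] at hcc
          exact hcc
        · intro b hb
          have hb' : (1 - e) * b * (1 - e) = b := hb
          have hc : (1 - e) * (b * n) * e = b * n := cornBN he hb' hn
          have hcc := ccwB (b * n) e
          rw [(vN1 (b * n) hc).2, mul_assoc] at hcc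
          exact hcc
      have hMpN : ∀ m, e * m * (1 - e) = m → m * pN = 0 := by
        intro m hm
        apply hf.1
        · show e * (m * pN) * e = m * pN
          rw [← mul_assoc e m pN, (cm he hm).1, mul_assoc, hpNe]
        · intro m'' hm''
          have hm2 : e * m'' * (1 - e) = m'' := hm''
          rw [mul_assoc, hpNM m'' hm2, mul_zero]
      have hpMN : ∀ n, (1 - e) * n * e = n → pM * n = 0 := by
        intro n hn
        apply hf.1
        · show e * (pM * n) * e = pM * n
          rw [← mul_assoc e pM n, hepM, mul_assoc, (cnl he hn).2.1]
        · intro m'' hm''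
          have hm2 : e * m'' * (1 - e) = m'' := hm''
          have h := star3 n m'' hn hm2
          rw [hNpM n hn, mul_zero] at h
          exact neg_eq_zero.mp h.symm
      exact ⟨hMpN, hpNM, hNpM, hpMN⟩
  obtain ⟨hMpN, hpNM, hNpM, hpMN⟩ := hV
  -- corner helpers for Peirce components
  have hcA : ∀ c : G, e * (e * c * e) * e = e * c * e := fun c => by
    rw [← mul_assoc, ← mul_assoc, he, mul_assoc, he]
  have hcM : ∀ c : G, e * (e * c * (1 - e)) * (1 - e) = e * c * (1 - e) := fun c => by
    rw [← mul_assoc, ← mul_assoc, he, mul_assoc, hff]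
  have hcN : ∀ c : G, (1 - e) * ((1 - e) * c * e) * e = (1 - e) * c * e := fun c => by
    rw [← mul_assoc, ← mul_assoc, hff, mul_assoc, he]
  have hcB : ∀ c : G, (1 - e) * ((1 - e) * c * (1 - e)) * (1 - e) = (1 - e) * c * (1 - e) :=
    fun c => by rw [← mul_assoc, ← mul_assoc, hff, mul_assoc, hff]
  have hsplitc : ∀ c : G,
      c = e * c * e + e * c * (1 - e) + (1 - e) * c * e + (1 - e) * c * (1 - e) :=
    fun c => by noncomm_ring
  -- c ↦ brk c (pM - pN) formula
  have s1 : ∀ c : G, c * pM = e * c * e * pM := by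
    intro c
    have hd : c * pM = e * c * e * pM + e * c * (1 - e) * pM + (1 - e) * c * e * pM
        + (1 - e) * c * (1 - e) * pM := by
      conv_lhs => rw [hsplitc c]
      simp only [add_mul]
    rw [hd]
    rw [mul_assoc (e * c) (1 - e) pM, hfpM, mul_zero]
    rw [hNpM ((1 - e) * c * e) (hcN c)]
    rw [mul_assoc ((1 - e) * c) (1 - e) pM, hfpM, mul_zero]
    rw [add_zero, add_zero, add_zero]
  have s2 : ∀ c : G, c * pN = (1 - e) * c * (1 - e) * pN := by
    intro c
    have hd : c * pN = e * c * e * pN + e * c * (1 - e) * pN + (1 - e) * c * e * pN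
        + (1 - e) * c * (1 - e) * pN := by
      conv_lhs => rw [hsplitc c]
      simp only [add_mul]
    rw [hd]
    rw [mul_assoc (e * c) e pN, hepN, mul_zero]
    rw [hMpN (e * c * (1 - e)) (hcM c)]
    rw [mul_assoc ((1 - e) * c) e pN, hepN, mul_zero]
    rw [zero_add, zero_add, zero_add]
  have s3 : ∀ c : G, pM * c = pM * ((1 - e) * c * (1 - e)) := by
    intro c
    have hd : pM * c = pM * (e * c * e) + pM * (e * c * (1 - e)) + pM * ((1 - e) * c * e)
        + pM * ((1 - e) * c * (1 - e)) := by
      conv_lhs => rw [hsplitc c]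
      simp only [mul_add]
    rw [hd]
    rw [← mul_assoc pM (e * c) e, ← mul_assoc pM e c, hpMe, zero_mul, zero_mul]
    rw [← mul_assoc pM (e * c) (1 - e), ← mul_assoc pM e c, hpMe, zero_mul, zero_mul]
    rw [hpMN ((1 - e) * c * e) (hcN c)]
    rw [zero_add, zero_add, zero_add]
  have s4 : ∀ c : G, pN * c = pN * (e * c * e) := by
    intro c
    have hd : pN * c = pN * (e * c * e) + pN * (e * c * (1 - e)) + pN * ((1 - e) * c * e)
        + pN * ((1 - e) * c * (1 - e)) := by
      conv_lhs => rw [hsplitc c]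
      simp only [mul_add]
    rw [hd]
    rw [hpNM (e * c * (1 - e)) (hcM c)]
    rw [← mul_assoc pN ((1 - e) * c) e, ← mul_assoc pN (1 - e) c, hpNf, zero_mul, zero_mul]
    rw [← mul_assoc pN ((1 - e) * c) (1 - e), ← mul_assoc pN (1 - e) c, hpNf, zero_mul,
      zero_mul]
    rw [add_zero, add_zero, add_zero]
  have hbrkX : ∀ c : G, brk c (pM - pN) =
      (e * c * e * pM - pM * ((1 - e) * c * (1 - e)))
        + (pN * (e * c * e) - (1 - e) * c * (1 - e) * pN) := by
    intro c
    rw [brk, mul_sub c pM pN, sub_mul pM pN c]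
    rw [s1 c, s2 c, s3 c, s4 c]
    abel
  -- Peirce components of products
  have hprodA : ∀ u v : G,
      e * (u * v) * e = (e * u * e) * (e * v * e) + (e * u * (1 - e)) * ((1 - e) * v * e) := by
    intro u v
    simp only [mul_assoc, sub_mul, mul_sub, one_mul, mul_one, hee, he]
    abel
  have hprodB : ∀ u v : G,
      (1 - e) * (u * v) * (1 - e) = ((1 - e) * u * e) * (e * v * (1 - e))
        + ((1 - e) * u * (1 - e)) * ((1 - e) * v * (1 - e)) := by
    intro u v
    simp only [mul_assoc, sub_mul, mul_sub, one_mul, mul_one, hee, he]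
    abel
  have hdA : ∀ u v : G, e * brk u v * e =
      (e * u * e) * (e * v * e) - (e * v * e) * (e * u * e)
        + ((e * u * (1 - e)) * ((1 - e) * v * e) - (e * v * (1 - e)) * ((1 - e) * u * e)) := by
    intro u v
    rw [brk, mul_sub e (u * v) (v * u), sub_mul (e * (u * v)) (e * (v * u)) e]
    rw [hprodA u v, hprodA v u]
    abel
  have hdB : ∀ u v : G, (1 - e) * brk u v * (1 - e) =
      ((1 - e) * u * e) * (e * v * (1 - e)) - ((1 - e) * v * e) * (e * u * (1 - e))
        + (((1 - e) * u * (1 - e)) * ((1 - e) * v * (1 - e))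
          - ((1 - e) * v * (1 - e)) * ((1 - e) * u * (1 - e))) := by
    intro u v
    rw [brk, mul_sub (1 - e) (u * v) (v * u), sub_mul ((1 - e) * (u * v)) ((1 - e) * (v * u)) (1 - e)]
    rw [hprodB u v, hprodB v u]
    abel
  have hdistL : ∀ A B C D X : G, (A - B + (C - D)) * X = A * X - B * X + (C * X - D * X) := by
    intro A B C D X; noncomm_ring
  have hdistR : ∀ A B C D X : G, X * (A - B + (C - D)) = X * A - X * B + (X * C - X * D) := by
    intro A B C D X; noncomm_ring
  -- the four vanishing components
  have t1 : ∀ u v : G, e * brk u v * e * pM = 0 := by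
    intro u v
    rw [hdA u v, hdistL]
    rw [mul_assoc (e * u * e) (e * v * e) pM, mul_assoc (e * v * e) (e * u * e) pM,
      hIM (e * u * e) (e * v * e) (hcA u) (hcA v)]
    rw [mul_assoc (e * u * (1 - e)) ((1 - e) * v * e) pM, hNpM ((1 - e) * v * e) (hcN v),
      mul_zero]
    rw [mul_assoc (e * v * (1 - e)) ((1 - e) * u * e) pM, hNpM ((1 - e) * u * e) (hcN u),
      mul_zero]
    simp only [sub_self, add_zero, zero_add, sub_zero]
  have t2 : ∀ u v : G, pN * (e * brk u v * e) = 0 := by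
    intro u v
    rw [hdA u v, hdistR]
    rw [← mul_assoc pN (e * u * e) (e * v * e), ← mul_assoc pN (e * v * e) (e * u * e),
      hIN (e * u * e) (e * v * e) (hcA u) (hcA v)]
    rw [← mul_assoc pN (e * u * (1 - e)) ((1 - e) * v * e),
      hpNM (e * u * (1 - e)) (hcM u), zero_mul]
    rw [← mul_assoc pN (e * v * (1 - e)) ((1 - e) * u * e),
      hpNM (e * v * (1 - e)) (hcM v), zero_mul]
    simp only [sub_self, add_zero, zero_add, sub_zero]
  have t3 : ∀ u v : G, pM * ((1 - e) * brk u v * (1 - e)) = 0 := by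
    intro u v
    rw [hdB u v, hdistR]
    rw [← mul_assoc pM ((1 - e) * u * e) (e * v * (1 - e)),
      hpMN ((1 - e) * u * e) (hcN u), zero_mul]
    rw [← mul_assoc pM ((1 - e) * v * e) (e * u * (1 - e)),
      hpMN ((1 - e) * v * e) (hcN v), zero_mul]
    rw [← mul_assoc pM ((1 - e) * u * (1 - e)) ((1 - e) * v * (1 - e)),
      ← mul_assoc pM ((1 - e) * v * (1 - e)) ((1 - e) * u * (1 - e)),
      hIIM ((1 - e) * v * (1 - e)) ((1 - e) * u * (1 - e)) (hcB v) (hcB u)]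
    simp only [sub_self, add_zero, zero_add, sub_zero]
  have t4 : ∀ u v : G, (1 - e) * brk u v * (1 - e) * pN = 0 := by
    intro u v
    rw [hdB u v, hdistL]
    rw [mul_assoc ((1 - e) * u * e) (e * v * (1 - e)) pN,
      hMpN (e * v * (1 - e)) (hcM v), mul_zero]
    rw [mul_assoc ((1 - e) * v * e) (e * u * (1 - e)) pN,
      hMpN (e * u * (1 - e)) (hcM u), mul_zero]
    rw [mul_assoc ((1 - e) * u * (1 - e)) ((1 - e) * v * (1 - e)) pN,
      mul_assoc ((1 - e) * v * (1 - e)) ((1 - e) * u * (1 - e)) pN,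
      hIIN ((1 - e) * u * (1 - e)) ((1 - e) * v * (1 - e)) (hcB u) (hcB v)]
    simp only [sub_self, add_zero, zero_add, sub_zero]
  -- CLAIM 1
  have claim1 : ∀ u v : G, brk (brk u v) (pM - pN) = 0 := by
    intro u v
    rw [hbrkX (brk u v), t1 u v, t2 u v, t3 u v, t4 u v]
    simp only [sub_self, add_zero, zero_add, sub_zero, zero_sub, neg_zero]
  -- symmetry and bracket identities from claim 1
  have sym : ∀ u v : G, brk u (brk v (pM - pN)) = brk v (brk u (pM - pN)) := by
    intro u v
    have h := brk_jac u v (pM - pN)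
    rw [claim1 u v] at h
    exact sub_eq_zero.mp h.symm
  have K2 : ∀ u v x' y' : G, brk (brk u v) (brk y' (brk x' (pM - pN))) = 0 := by
    intro u v x' y'
    rw [brk_ad (brk u v) y' (brk x' (pM - pN))]
    rw [sym (brk (brk u v) y') x', claim1 (brk u v) y', brk_zero_right x']
    rw [sym (brk u v) x', claim1 u v, brk_zero_right x', brk_zero_right y', zero_add]
  have K1 : ∀ x y z : G, brk x (brk y (brk z (pM - pN))) = brk z (brk y (brk x (pM - pN))) := by
    intro x y z
    rw [sym y z]
    rw [brk_ad x z (brk y (pM - pN))]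
    rw [sym (brk x z) y, claim1 x z, brk_zero_right y, zero_add]
    rw [sym x y]
  have hswap : ∀ x a z : G,
      brk x (brk a (brk z (pM - pN))) = brk a (brk x (brk z (pM - pN))) := by
    intro x a z
    rw [brk_ad x a (brk z (pM - pN)), sym (brk x a) z, claim1 x a, brk_zero_right z,
      zero_add]
  -- κ is a 3-Lie derivation
  have hκ : IsLieDer3 R (fun x y z => brk x (brk y (brk z (pM - pN)))) := by
    refine ⟨?_, ?_, ?_, ?_, ?_, ?_⟩
    · intro y z
      refine ⟨fun u u' => ?_, fun r u => ?_⟩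
      · show brk (u + u') (brk y (brk z (pM - pN)))
            = brk u (brk y (brk z (pM - pN))) + brk u' (brk y (brk z (pM - pN)))
        rw [brk_add_left]
      · show brk (r • u) (brk y (brk z (pM - pN))) = r • brk u (brk y (brk z (pM - pN)))
        rw [brk_smul_left]
    · intro x z
      refine ⟨fun u u' => ?_, fun r u => ?_⟩
      · show brk x (brk (u + u') (brk z (pM - pN)))
            = brk x (brk u (brk z (pM - pN))) + brk x (brk u' (brk z (pM - pN)))
        rw [brk_add_left, brk_add_right]
      · show brk x (brk (r • u) (brk z (pM - pN))) = r • brk x (brk u (brk z (pM - pN)))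
        rw [brk_smul_left, brk_smul_right]
    · intro x y
      refine ⟨fun u u' => ?_, fun r u => ?_⟩
      · show brk x (brk y (brk (u + u') (pM - pN)))
            = brk x (brk y (brk u (pM - pN))) + brk x (brk y (brk u' (pM - pN)))
        rw [brk_add_left, brk_add_right, brk_add_right]
      · show brk x (brk y (brk (r • u) (pM - pN))) = r • brk x (brk y (brk u (pM - pN)))
        rw [brk_smul_left, brk_smul_right, brk_smul_right]
    · intro y z a b
      exact brk_leib a b (brk y (brk z (pM - pN)))
    · intro x z a b
      show brk x (brk (brk a b) (brk z (pM - pN)))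
          = brk (brk x (brk a (brk z (pM - pN)))) b + brk a (brk x (brk b (brk z (pM - pN))))
      rw [sym (brk a b) z, claim1 a b, brk_zero_right z, brk_zero_right x]
      rw [hswap x a z, hswap x b z,
        ← brk_leib a b (brk x (brk z (pM - pN))), K2 a b z x]
    · intro x y a b
      show brk x (brk y (brk (brk a b) (pM - pN)))
          = brk (brk x (brk y (brk a (pM - pN)))) b + brk a (brk x (brk y (brk b (pM - pN))))
      rw [claim1 a b, brk_zero_right y, brk_zero_right x]
      rw [K1 x y a, K1 x y b, ← brk_leib a b (brk y (brk x (pM - pN))), K2 a b x y]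
  -- clean component versions of hκ
  have kk5 : ∀ x z a b : G, brk x (brk (brk a b) (brk z (pM - pN)))
      = brk (brk x (brk a (brk z (pM - pN)))) b
        + brk a (brk x (brk b (brk z (pM - pN)))) := hκ.2.2.2.2.1
  have kk6 : ∀ x y a b : G, brk x (brk y (brk (brk a b) (pM - pN)))
      = brk (brk x (brk y (brk a (pM - pN)))) b
        + brk a (brk x (brk y (brk b (pM - pN)))) := hκ.2.2.2.2.2
  -- clean linearity facts of φ
  have hadd1 : ∀ y z u u' : G, φ (u + u') y z = φ u y z + φ u' y z :=
    fun y z u u' => (hlin1 y z).map_add u u'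
  have hsmul1 : ∀ (y z : G) (r : R) (u : G), φ (r • u) y z = r • φ u y z :=
    fun y z r u => (hlin1 y z).map_smul r u
  have hadd2 : ∀ x z u u' : G, φ x (u + u') z = φ x u z + φ x u' z :=
    fun x z u u' => (hlin2 x z).map_add u u'
  have hsmul2 : ∀ (x z : G) (r : R) (u : G), φ x (r • u) z = r • φ x u z :=
    fun x z r u => (hlin2 x z).map_smul r u
  have hadd3 : ∀ x y u u' : G, φ x y (u + u') = φ x y u + φ x y u' :=
    fun x y u u' => (hlin3 x y).map_add u u'
  have hsmul3 : ∀ (x y : G) (r : R) (u : G), φ x y (r • u) = r • φ x y u :=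
    fun x y r u => (hlin3 x y).map_smul r u
  -- ψ = φ - κ is a 3-Lie derivation
  have hψ : IsLieDer3 R (fun x y z => φ x y z - brk x (brk y (brk z (pM - pN)))) := by
    refine ⟨?_, ?_, ?_, ?_, ?_, ?_⟩
    · intro y z
      refine ⟨fun u u' => ?_, fun r u => ?_⟩
      · show φ (u + u') y z - brk (u + u') (brk y (brk z (pM - pN)))
            = (φ u y z - brk u (brk y (brk z (pM - pN))))
              + (φ u' y z - brk u' (brk y (brk z (pM - pN))))
        rw [hadd1, brk_add_left]
        abel
      · show φ (r • u) y z - brk (r • u) (brk y (brk z (pM - pN)))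
            = r • (φ u y z - brk u (brk y (brk z (pM - pN))))
        rw [hsmul1, brk_smul_left, smul_sub]
    · intro x z
      refine ⟨fun u u' => ?_, fun r u => ?_⟩
      · show φ x (u + u') z - brk x (brk (u + u') (brk z (pM - pN)))
            = (φ x u z - brk x (brk u (brk z (pM - pN))))
              + (φ x u' z - brk x (brk u' (brk z (pM - pN))))
        rw [hadd2, brk_add_left, brk_add_right]
        abel
      · show φ x (r • u) z - brk x (brk (r • u) (brk z (pM - pN)))
            = r • (φ x u z - brk x (brk u (brk z (pM - pN))))
        rw [hsmul2, brk_smul_left, brk_smul_right, smul_sub]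
    · intro x y
      refine ⟨fun u u' => ?_, fun r u => ?_⟩
      · show φ x y (u + u') - brk x (brk y (brk (u + u') (pM - pN)))
            = (φ x y u - brk x (brk y (brk u (pM - pN))))
              + (φ x y u' - brk x (brk y (brk u' (pM - pN))))
        rw [hadd3, brk_add_left, brk_add_right, brk_add_right]
        abel
      · show φ x y (r • u) - brk x (brk y (brk (r • u) (pM - pN)))
            = r • (φ x y u - brk x (brk y (brk u (pM - pN))))
        rw [hsmul3, brk_smul_left, brk_smul_right, brk_smul_right, smul_sub]
    · intro y z a b
      show φ (brk a b) y z - brk (brk a b) (brk y (brk z (pM - pN)))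
          = brk (φ a y z - brk a (brk y (brk z (pM - pN)))) b
            + brk a (φ b y z - brk b (brk y (brk z (pM - pN))))
      rw [hleib1 y z a b, brk_leib a b (brk y (brk z (pM - pN)))]
      simp only [brk_sub_left, brk_sub_right]
      abel
    · intro x z a b
      show φ x (brk a b) z - brk x (brk (brk a b) (brk z (pM - pN)))
          = brk (φ x a z - brk x (brk a (brk z (pM - pN)))) b
            + brk a (φ x b z - brk x (brk b (brk z (pM - pN))))
      rw [hleib2 x z a b, kk5 x z a b]
      simp only [brk_sub_left, brk_sub_right]
      abel
    · intro x y a b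
      show φ x y (brk a b) - brk x (brk y (brk (brk a b) (pM - pN)))
          = brk (φ x y a - brk x (brk y (brk a (pM - pN)))) b
            + brk a (φ x y b - brk x (brk y (brk b (pM - pN))))
      rw [hleib3 x y a b, kk6 x y a b]
      simp only [brk_sub_left, brk_sub_right]
      abel
  -- conclusion 4 : centrality of the diagonal part
  have hbx : brk e (brk e (brk e (pM - pN))) = pM + pN := by
    have hx1 : brk e (pM - pN) = pM + pN := by
      rw [brk, mul_sub, sub_mul, hepM, hepN, hpMe, hpNe]
      abel
    have hx2 : brk e (pM + pN) = pM - pN := by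
      rw [brk, mul_add, add_mul, hepM, hepN, hpMe, hpNe]
      abel
    rw [hx1, hx2, hx1]
  have hccp : cornerCentral e (e * p * e) := by
    have h := ccA he hf.1 (zm3 e e)
    rw [← hp] at h
    exact h
  obtain ⟨w, hwc, hwa⟩ := h1.1 (e * p * e) hccp
  have hwe : e * w = w * e := (hwc e).symm
  have hpB : (1 - e) * p * (1 - e) = (1 - e) * w * (1 - e) := by
    have hcorn : corner (1 - e) (1 - e) ((1 - e) * p * (1 - e) - (1 - e) * w * (1 - e)) := by
      show (1 - e) * ((1 - e) * p * (1 - e) - (1 - e) * w * (1 - e)) * (1 - e) = _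
      rw [mul_sub (1 - e) ((1 - e) * p * (1 - e)) ((1 - e) * w * (1 - e))]
      rw [sub_mul ((1 - e) * ((1 - e) * p * (1 - e))) ((1 - e) * ((1 - e) * w * (1 - e)))
        (1 - e)]
      rw [hcB p, hcB w]
    have hkey : ∀ m, corner e (1 - e) m →
        m * ((1 - e) * p * (1 - e) - (1 - e) * w * (1 - e)) = 0 := by
      intro m hm
      have hm' : e * m * (1 - e) = m := hm
      obtain ⟨hem, hme, hmf, hfm⟩ := cm he hm'
      have h2 := zm3 e e m hm'
      rw [← hp] at h2
      have hl : e * w * e * m = m * w := by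
        rw [mul_assoc (e * w) e m, hem, mul_assoc e w m, hwc m, ← mul_assoc e m w, hem]
      have hr : m * ((1 - e) * w * (1 - e)) = m * w := by
        rw [← mul_assoc m ((1 - e) * w) (1 - e), ← mul_assoc m (1 - e) w, hmf,
          mul_assoc m w (1 - e), hwc (1 - e), ← mul_assoc m (1 - e) w, hmf]
      have h3 : e * w * e * m = m * ((1 - e) * w * (1 - e)) := by rw [hl, hr]
      rw [mul_sub, ← h2, ← h3, hwa]
      exact sub_self _
    exact sub_eq_zero.mp (hf.2 _ hcorn hkey)
  have hfull : p - (pM + pN) = w := by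
    have hsp : p = e * p * e + pM + pN + (1 - e) * p * (1 - e) := by
      rw [hpM, hpN]; noncomm_ring
    rw [hsp, hwa, hpB]
    have h5 : e * w * e = w * e := by rw [hwe, mul_assoc, he]
    have h6 : (1 - e) * w * (1 - e) = w * (1 - e) := by
      have h7 : (1 - e) * w = w * (1 - e) := (hwc (1 - e)).symm
      rw [h7, mul_assoc, hff]
    rw [h5, h6]
    have h8 : w * e + w * (1 - e) = w := by
      rw [← mul_add w e (1 - e)]
      have h9 : e + (1 - e) = 1 := by abel
      rw [h9, mul_one]
    have h10 : w * e + pM + pN + w * (1 - e) - (pM + pN) = w * e + w * (1 - e) := by abel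
    rw [h10, h8]
  have hcent : central (p - brk e (brk e (brk e (pM - pN)))) := by
    rw [hbx, hfull]
    exact hwc
  exact ⟨claim1, hκ, hψ, hcent⟩
end

section
/- Let G be a generalized matrix algebra (as in the context) satisfying hypotheses (H1)–(H5) listed in the context, and let ψ : G × G × G → G be a 3-Lie derivation with ψ(e,e,e) ∈ Z(G). Then ψ(x,y,z) ∈ Z(G) for all x, y, z ∈ A ∪ B. -/
attribute [local instance] LieRing.ofAssociativeRing

section Peirce

variable {G : Type*} [Ring G] {e p q r w x : G}

theorem corner.idem_mul (hp : IsIdempotentElem p) (hx : corner p q x) : p * x = x := by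
  conv_lhs => rw [← hx]
  rw [← mul_assoc, ← mul_assoc, hp.eq, hx]

theorem corner.mul_idem (hq : IsIdempotentElem q) (hx : corner p q x) : x * q = x := by
  conv_lhs => rw [← hx]
  rw [mul_assoc, hq.eq, hx]

theorem corner.mul_right_eq_zero (hqr : q * r = 0) (hx : corner p q x) : x * r = 0 := by
  rw [← hx, mul_assoc, hqr, mul_zero]

theorem corner.mul_left_eq_zero (hrp : r * p = 0) (hx : corner p q x) : r * x = 0 := by
  rw [← hx, ← mul_assoc, ← mul_assoc, hrp, zero_mul, zero_mul]

theorem corner_mul_mul (hp : IsIdempotentElem p) (hq : IsIdempotentElem q) (y : G) :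
    corner p q (p * y * q) := by
  simp only [corner, ← mul_assoc, hp.eq]
  rw [mul_assoc _ q q, hq.eq]

theorem corner.mul {y : G} (hp : IsIdempotentElem p) (hr : IsIdempotentElem r)
    (hx : corner p q x) (hy : corner q r y) : corner p r (x * y) := by
  rw [corner, ← mul_assoc, hx.idem_mul hp, mul_assoc, hy.mul_idem hr]

theorem corner.mul_left_of_commute (hw : Commute p w) (hx : corner p q x) :
    corner p q (w * x) := by
  rw [corner]
  conv_rhs => rw [← hx]
  simp only [← mul_assoc, hw.eq]

theorem corner.mul_right_of_commute (hw : Commute q w) (hx : corner p q x) :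
    corner p q (x * w) := by
  rw [corner]
  conv_rhs => rw [← hx]
  simp only [mul_assoc, ← hw.eq]

theorem corner.sub {y : G} (hx : corner p q x) (hy : corner p q y) : corner p q (x - y) := by
  rw [corner, mul_sub, sub_mul, hx, hy]

theorem Commute.one_sub_left (h : Commute e w) : Commute (1 - e) w :=
  (Commute.one_left w).sub_left h

theorem mul_lie_mul_of_commute {c : G} (hp : Commute p c) (hq : Commute q c) (y : G) :
    p * ⁅c, y⁆ * q = ⁅c, p * y * q⁆ := by
  simp only [Ring.lie_def, mul_sub, sub_mul, ← mul_assoc, hp.eq]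
  simp only [mul_assoc, hq.eq]

theorem lie_lie_comm_of_commute {a b : G} (h : Commute a b) (y : G) :
    ⁅a, ⁅b, y⁆⁆ = ⁅b, ⁅a, y⁆⁆ := by
  rw [leibniz_lie, h.lie_eq, zero_lie, zero_add]

namespace IsIdempotentElem

theorem lie_eq_of_corner (he : IsIdempotentElem e) (hm : corner e (1 - e) x) : ⁅e, x⁆ = x := by
  rw [Ring.lie_def, hm.idem_mul he, hm.mul_right_eq_zero he.one_sub_mul_self, sub_zero]

theorem lie_eq_neg_of_corner (he : IsIdempotentElem e) (hn : corner (1 - e) e x) :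
    ⁅e, x⁆ = -x := by
  rw [Ring.lie_def, hn.mul_idem he, hn.mul_left_eq_zero he.mul_one_sub_self, zero_sub]

theorem mul_lie_mul_one_sub (he : IsIdempotentElem e) (y : G) :
    e * ⁅e, y⁆ * (1 - e) = e * y * (1 - e) := by
  have h : e * (y * e) * (1 - e) = 0 := by
    rw [mul_assoc, mul_assoc, he.mul_one_sub_self, mul_zero, mul_zero]
  rw [Ring.lie_def, mul_sub e, sub_mul, h, sub_zero, ← mul_assoc, he.eq]

theorem one_sub_mul_lie_mul (he : IsIdempotentElem e) (y : G) :
    (1 - e) * ⁅e, y⁆ * e = -((1 - e) * y * e) := by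
  have h : (1 - e) * (e * y) * e = 0 := by
    rw [← mul_assoc, he.one_sub_mul_self, zero_mul, zero_mul]
  rw [Ring.lie_def, mul_sub (1 - e), sub_mul, h, zero_sub, mul_assoc (1 - e), mul_assoc y, he.eq,
    ← mul_assoc]

theorem mul_lie_lie_mul_one_sub (he : IsIdempotentElem e) (y : G) :
    e * ⁅e, ⁅e, y⁆⁆ * (1 - e) = e * y * (1 - e) := by
  rw [he.mul_lie_mul_one_sub, he.mul_lie_mul_one_sub]

theorem one_sub_mul_lie_lie_mul (he : IsIdempotentElem e) (y : G) :
    (1 - e) * ⁅e, ⁅e, y⁆⁆ * e = (1 - e) * y * e := by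
  rw [he.one_sub_mul_lie_mul, he.one_sub_mul_lie_mul, neg_neg]

end IsIdempotentElem

end Peirce

section Criterion

variable {G : Type*} [Ring G] {e w : G}

theorem Faithful.commute_of_corner_left (hf : Faithful e) (he : IsIdempotentElem e)
    (hw : Commute e w) (hM : ∀ m, corner e (1 - e) m → Commute w m) {a : G}
    (ha : corner e e a) : Commute w a := by
  refine sub_eq_zero.mp <| hf.1 _
    ((ha.mul_left_of_commute hw).sub (ha.mul_right_of_commute hw)) fun m hm => ?_
  rw [sub_mul, mul_assoc, (hM _ (ha.mul he he.one_sub hm)).eq, mul_assoc, mul_assoc a w,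
    (hM m hm).eq, sub_self]

theorem Faithful.commute_of_corner_right (hf : Faithful e) (he : IsIdempotentElem e)
    (hw : Commute e w) (hM : ∀ m, corner e (1 - e) m → Commute w m) {b : G}
    (hb : corner (1 - e) (1 - e) b) : Commute w b := by
  refine sub_eq_zero.mp <| hf.2 _ ((hb.mul_left_of_commute hw.one_sub_left).sub
    (hb.mul_right_of_commute hw.one_sub_left)) fun m hm => ?_
  rw [mul_sub, ← mul_assoc, ← (hM m hm).eq, ← mul_assoc, ← (hM _ (hm.mul he he.one_sub hb)).eq,
    mul_assoc, sub_self]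

theorem Faithful.central_of_commute (hf : Faithful e) (he : IsIdempotentElem e)
    (hw : Commute e w) (hM : ∀ m, corner e (1 - e) m → Commute w m)
    (hN : ∀ n, corner (1 - e) e n → Commute w n) : central w := by
  intro g
  have hg : g = e * g * e + e * g * (1 - e) + (1 - e) * g * e + (1 - e) * g * (1 - e) := by
    noncomm_ring
  change Commute w g
  rw [hg]
  have hf' := he.one_sub
  exact (((hf.commute_of_corner_left he hw hM (corner_mul_mul he he g)).add_right
    (hM _ (corner_mul_mul he hf' g))).add_right (hN _ (corner_mul_mul hf' he g))).add_right
    (hf.commute_of_corner_right he hw hM (corner_mul_mul hf' hf' g))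

end Criterion

namespace LieDerivation

variable {R G : Type*} [CommRing R] [Ring G] [Algebra R G]

def ofIsLinearMap (f : G → G) (hlin : IsLinearMap R f)
    (hf : ∀ a b, f (brk a b) = brk (f a) b + brk a (f b)) : LieDerivation R G G where
  toLinearMap := hlin.mk' f
  leibniz' a b := by
    simp only [IsLinearMap.mk'_apply]
    rw [← lie_skew b (f a), sub_neg_eq_add, add_comm]
    exact hf a b

variable (D : LieDerivation R G G)

theorem lie_apply_comm_of_commute {a b : G} (h : Commute a b) : ⁅a, D b⁆ = ⁅b, D a⁆ := by
  have h0 := D.apply_lie_eq_sub a b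
  rw [h.lie_eq, map_zero] at h0
  exact sub_eq_zero.mp h0.symm

theorem apply_lie_of_central {c : G} (h : central (D c)) (g : G) : D ⁅c, g⁆ = ⁅c, D g⁆ := by
  rw [D.apply_lie_eq_add, Commute.lie_eq (h g), add_zero]

theorem commute_apply_of_corner {p q z m : G} (hpz : Commute p z) (hqz : Commute q z)
    (hp : Commute p (D z)) (hq : Commute q (D z)) (hm : corner p q m)
    (h : p * D ⁅z, m⁆ * q = ⁅z, p * D m * q⁆) : Commute (D z) m := by
  rw [D.apply_lie_eq_add, mul_add, add_mul, mul_lie_mul_of_commute hpz hqz,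
    mul_lie_mul_of_commute hp hq, hm, add_eq_left] at h
  exact commute_iff_lie_eq.mpr h

theorem central_apply_of_commute_apply {e : G} (hf : Faithful e) (he : IsIdempotentElem e)
    (h : Commute e (D e)) : central (D e) := by
  have he' : Commute (1 - e) e := (Commute.refl e).one_sub_left
  refine hf.central_of_commute he h
    (fun m hm => D.commute_apply_of_corner (.refl e) he' h h.one_sub_left hm ?_)
    (fun n hn => D.commute_apply_of_corner he' (.refl e) h.one_sub_left h hn ?_)
  · rw [he.lie_eq_of_corner hm, he.lie_eq_of_corner (corner_mul_mul he he.one_sub _)]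
  · rw [he.lie_eq_neg_of_corner hn, map_neg,
      he.lie_eq_neg_of_corner (corner_mul_mul he.one_sub he _), mul_neg, neg_mul]

end LieDerivation

theorem inAB.commute {G : Type*} [Ring G] {e x : G} (he : IsIdempotentElem e) (hx : inAB e x) :
    Commute e x := by
  rcases hx with hx | hx
  · exact (hx.idem_mul he).trans (hx.mul_idem he).symm
  · exact (hx.mul_left_eq_zero he.mul_one_sub_self).trans
      (hx.mul_right_eq_zero he.one_sub_mul_self).symm

namespace IsLieDer3

variable {R G : Type*} [CommRing R] [Ring G] [Algebra R G] {ψ : G → G → G → G} {e : G}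

def lieDerivation₁ (hψ : IsLieDer3 R ψ) (y z : G) : LieDerivation R G G :=
  .ofIsLinearMap (ψ · y z) (hψ.1 y z) (hψ.2.2.2.1 y z)

def lieDerivation₂ (hψ : IsLieDer3 R ψ) (x z : G) : LieDerivation R G G :=
  .ofIsLinearMap (ψ x · z) (hψ.2.1 x z) (hψ.2.2.2.2.1 x z)

def lieDerivation₃ (hψ : IsLieDer3 R ψ) (x y : G) : LieDerivation R G G :=
  .ofIsLinearMap (ψ x y) (hψ.2.2.1 x y) (hψ.2.2.2.2.2 x y)

theorem central_apply_idem_idem (hψ : IsLieDer3 R ψ) (hf : Faithful e)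
    (he : IsIdempotentElem e) (hc : central (ψ e e e)) {z : G} (hz : Commute e z) :
    central (ψ e e z) := by
  refine (hψ.lieDerivation₁ e z).central_apply_of_commute_apply hf he
    (commute_iff_lie_eq.mpr ?_)
  exact ((hψ.lieDerivation₃ e e).lie_apply_comm_of_commute hz).trans
    (Commute.lie_eq (hc z).symm)

theorem central_apply_snd_idem (hψ : IsLieDer3 R ψ) (hf : Faithful e)
    (he : IsIdempotentElem e) (hc : central (ψ e e e)) {x z : G} (hx : Commute e x)
    (hz : Commute e z) : central (ψ x e z) := by
  refine (hψ.lieDerivation₂ x z).central_apply_of_commute_apply hf he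
    (commute_iff_lie_eq.mpr ?_)
  exact ((hψ.lieDerivation₁ e z).lie_apply_comm_of_commute hx).trans
    (Commute.lie_eq (hψ.central_apply_idem_idem hf he hc hz x).symm)

theorem apply_idem_idem_lie (hψ : IsLieDer3 R ψ) (hf : Faithful e)
    (he : IsIdempotentElem e) (hc : central (ψ e e e)) {c : G} (hc' : Commute e c) (g : G) :
    ψ e e ⁅c, g⁆ = ⁅c, ψ e e g⁆ :=
  (hψ.lieDerivation₃ e e).apply_lie_of_central (hψ.central_apply_idem_idem hf he hc hc') g

theorem lie_idem_lie_idem_apply (hψ : IsLieDer3 R ψ) {x y : G} (hx : Commute e x)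
    (hy : Commute e y) (g : G) : ⁅e, ⁅e, ψ x y g⁆⁆ = ⁅y, ⁅x, ψ e e g⁆⁆ := by
  have hxe : ⁅e, ψ x e g⁆ = ⁅x, ψ e e g⁆ :=
    (hψ.lieDerivation₁ e g).lie_apply_comm_of_commute hx
  have hye : ⁅e, ψ x y g⁆ = ⁅y, ψ x e g⁆ :=
    (hψ.lieDerivation₂ x g).lie_apply_comm_of_commute hy
  rw [hye, lie_lie_comm_of_commute hy, hxe]

theorem lie_lie_comm_apply_idem_idem (hψ : IsLieDer3 R ψ) (hf : Faithful e)
    (he : IsIdempotentElem e) (hc : central (ψ e e e)) {u w : G} (hu : Commute e u)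
    (hw : Commute e w) (g : G) : ⁅u, ⁅w, ψ e e g⁆⁆ = ⁅w, ⁅u, ψ e e g⁆⁆ := by
  have hue : ∀ h, ⁅e, ψ u e h⁆ = ⁅u, ψ e e h⁆ := fun h =>
    (hψ.lieDerivation₁ e h).lie_apply_comm_of_commute hu
  have h : ⁅e, ψ u e ⁅w, g⁆⁆ = ⁅e, ⁅w, ψ u e g⁆⁆ := congrArg (⁅e, ·⁆)
    ((hψ.lieDerivation₃ u e).apply_lie_of_central (hψ.central_apply_snd_idem hf he hc hu hw) g)
  rwa [hue, hψ.apply_idem_idem_lie hf he hc hw, lie_lie_comm_of_commute hw, hue] at h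

theorem lie_idem_lie_idem_apply_lie (hψ : IsLieDer3 R ψ) (hf : Faithful e)
    (he : IsIdempotentElem e) (hc : central (ψ e e e)) {x y z : G} (hx : Commute e x)
    (hy : Commute e y) (hz : Commute e z) (g : G) :
    ⁅e, ⁅e, ψ x y ⁅z, g⁆⁆⁆ = ⁅z, ⁅e, ⁅e, ψ x y g⁆⁆⁆ := by
  rw [hψ.lie_idem_lie_idem_apply hx hy, hψ.lie_idem_lie_idem_apply hx hy,
    hψ.apply_idem_idem_lie hf he hc hz, hψ.lie_lie_comm_apply_idem_idem hf he hc hx hz,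
    ← hψ.apply_idem_idem_lie hf he hc hx, hψ.lie_lie_comm_apply_idem_idem hf he hc hy hz]

theorem central_apply (hψ : IsLieDer3 R ψ) (hf : Faithful e)
    (he : IsIdempotentElem e) (hc : central (ψ e e e)) {x y z : G} (hx : Commute e x)
    (hy : Commute e y) (hz : Commute e z) : central (ψ x y z) := by
  have hez : Commute e (ψ x y z) := commute_iff_lie_eq.mpr <|
    ((hψ.lieDerivation₂ x z).lie_apply_comm_of_commute hy).trans
      (Commute.lie_eq (hψ.central_apply_snd_idem hf he hc hx hz y).symm)
  have hoff := hψ.lie_idem_lie_idem_apply_lie hf he hc hx hy hz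
  refine hf.central_of_commute he hez
    (fun m hm => (hψ.lieDerivation₃ x y).commute_apply_of_corner hz hz.one_sub_left hez
      hez.one_sub_left hm ?_)
    (fun n hn => (hψ.lieDerivation₃ x y).commute_apply_of_corner hz.one_sub_left hz
      hez.one_sub_left hez hn ?_)
  · change e * ψ x y ⁅z, m⁆ * (1 - e) = ⁅z, e * ψ x y m * (1 - e)⁆
    rw [← he.mul_lie_lie_mul_one_sub, hoff, mul_lie_mul_of_commute hz hz.one_sub_left,
      he.mul_lie_lie_mul_one_sub]
  · change (1 - e) * ψ x y ⁅z, n⁆ * e = ⁅z, (1 - e) * ψ x y n * e⁆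
    rw [← he.one_sub_mul_lie_lie_mul, hoff, mul_lie_mul_of_commute hz.one_sub_left hz,
      he.one_sub_mul_lie_lie_mul]

end IsLieDer3

theorem threeLieDer_central_values_on_AB_general {R : Type*} [CommRing R]
    {G : Type*} [Ring G] [Algebra R G] (e : G) (he : e * e = e)
    (hf : Faithful e)
    (ψ : G → G → G → G) (hψ : IsLieDer3 R ψ) (hc : central (ψ e e e)) :
    ∀ x y z : G, inAB e x → inAB e y → inAB e z → central (ψ x y z) :=
  fun _ _ _ hx hy hz =>
    hψ.central_apply hf he hc (hx.commute he) (hy.commute he) (hz.commute he)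

theorem threeLieDer_central_values_on_AB {R : Type*} [CommRing R]
    (htf : ∀ r : R, r + r = 0 → r = 0)
    {G : Type*} [Ring G] [Algebra R G] (e : G) (he : e * e = e)
    (he0 : e ≠ 0) (he1 : e ≠ 1) (hf : Faithful e)
    (h1 : H1P e) (h2 : H2P e) (h3 : H3P G) (h4 : H4P e) (h5 : H5P R e)
    (ψ : G → G → G → G) (hψ : IsLieDer3 R ψ) (hc : central (ψ e e e)) :
    ∀ x y z : G, inAB e x → inAB e y → inAB e z → central (ψ x y z) :=
  threeLieDer_central_values_on_AB_general e he hf ψ hψ hc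
end
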